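/- arXiv:math/0509612 — 6 statements merged into one kernel-verified Lean document; each statement's English description precedes it below -/
import Mathlib

section
/- Let h : [0,∞) → ℝ be continuous and upward Lipschitz continuous with constant C (i.e. h(x) − h(y) ≤ C(x − y) for all x ≥ y ≥ 0). Suppose there exists x₀ > 0 such that h(x) < 0 for all x ≥ x₀ and ∫_{x₀}^∞ 1/(−h(x)) dx < ∞. Then h(x) → −∞ as x → ∞. -/
open Filter Set

/-- Assumption A2 + upward Lipschitz continuity force `h` to tend to `-∞`:
if `h` is continuous on `[0,∞)`, upward Lipschitz with constant `C`, negative on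
`[x₀,∞)` for some `x₀ > 0` and `∫_{x₀}^∞ 1/(-h) < ∞`, then `h(x) → -∞` as `x → ∞`. -/
theorem stmt0 (h : ℝ → ℝ) (C : ℝ)
    (hcont : ContinuousOn h (Ici 0))
    (hup : ∀ x y : ℝ, 0 ≤ y → y ≤ x → h x - h y ≤ C * (x - y))
    (x₀ : ℝ) (hx₀ : 0 < x₀)
    (hneg : ∀ x, x₀ ≤ x → h x < 0)
    (hint : MeasureTheory.IntegrableOn (fun x => 1 / (-h x)) (Ici x₀)) :
    Tendsto h atTop atBot := by
  set f : ℝ → ℝ := fun x => 1 / (-h x) with hf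
  rw [tendsto_atBot]
  by_contra hcon
  push_neg at hcon
  obtain ⟨b, hb⟩ := hcon
  have hb' : ∃ᶠ x in atTop, b < h x := hb
  -- b < 0
  obtain ⟨z, hz1, hz2⟩ := (hb'.and_eventually (eventually_ge_atTop x₀)).exists
  have hbneg : b < 0 := hz1.trans (hneg z hz2)
  set C' : ℝ := max C 0 with hC'
  have hC'0 : 0 ≤ C' := le_max_right _ _
  have hcb : 0 < C' - b := by linarith
  set c : ℝ := 1 / (C' - b) with hc
  have hcpos : 0 < c := by positivity
  set F : ℝ → ℝ := fun t => ∫ y in x₀..t, f y with hFdef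
  have hintIoi : MeasureTheory.IntegrableOn f (Ioi x₀) :=
    hint.mono_set Ioi_subset_Ici_self
  have hF : Tendsto F atTop (nhds (∫ y in Ioi x₀, f y)) :=
    MeasureTheory.intervalIntegral_tendsto_integral_Ioi x₀ hintIoi tendsto_id
  have hsub : Tendsto (fun x : ℝ => x - 1) atTop atTop :=
    tendsto_atTop_add_const_right atTop (-1) tendsto_id
  have hF' : Tendsto (fun x => F x - F (x - 1)) atTop (nhds 0) := by
    have := hF.sub (hF.comp hsub)
    simpa using this
  have hev : ∀ᶠ x in atTop, F x - F (x - 1) < c := hF'.eventually (gt_mem_nhds hcpos)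
  obtain ⟨x, ⟨hxb, hxge⟩, hxlt⟩ :=
    ((hb'.and_eventually (eventually_ge_atTop (x₀ + 1))).and_eventually hev).exists
  -- pointwise lower bound on f on Ioc (x-1) x
  have hx1 : x₀ ≤ x - 1 := by linarith
  have hkey : ∀ y ∈ Ioc (x - 1) x, c ≤ f y := by
    intro y hy
    have hy1 : x - 1 < y := hy.1
    have hy2 : y ≤ x := hy.2
    have hyx₀ : x₀ ≤ y := le_of_lt (lt_of_le_of_lt hx1 hy1)
    have hy0 : 0 ≤ y := le_trans hx₀.le hyx₀
    have hlip := hup x y hy0 hy2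
    have hCC' : C * (x - y) ≤ C' * (x - y) :=
      mul_le_mul_of_nonneg_right (le_max_left _ _) (by linarith)
    have h1 : C' * (x - y) ≤ C' := by nlinarith
    have hhy : b - C' < h y := by nlinarith
    have hhyneg : h y < 0 := hneg y hyx₀
    have h2 : 0 < -h y := by linarith
    have h3 : -h y < C' - b := by linarith
    have : 1 / (C' - b) ≤ 1 / (-h y) := by
      apply one_div_le_one_div_of_le h2 h3.le
    simpa [hf, hc] using this
  -- integral over Ioc (x-1) x is at least c
  have hintIoc : MeasureTheory.IntegrableOn f (Ioc (x - 1) x) :=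
    hint.mono_set (fun y hy => le_of_lt (lt_of_le_of_lt hx1 hy.1))
  have hlow : c * (MeasureTheory.volume (Ioc (x - 1) x)).toReal ≤ ∫ y in Ioc (x - 1) x, f y :=
    by have := MeasureTheory.setIntegral_ge_of_const_le measurableSet_Ioc
         (by simp) hkey hintIoc
       rw [smul_eq_mul, mul_comm] at this
       exact this
  have hmeas : (MeasureTheory.volume (Ioc (x - 1) x)).toReal = 1 := by
    rw [Real.volume_Ioc]
    norm_num
  rw [hmeas, mul_one] at hlow
  -- F x - F (x-1) equals that integral
  have hii1 : IntervalIntegrable f MeasureTheory.volume x₀ x := by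
    apply MeasureTheory.IntegrableOn.intervalIntegrable
    apply hint.mono_set
    rw [uIcc_of_le (by linarith)]
    exact Icc_subset_Ici_self
  have hii2 : IntervalIntegrable f MeasureTheory.volume x₀ (x - 1) := by
    apply MeasureTheory.IntegrableOn.intervalIntegrable
    apply hint.mono_set
    rw [uIcc_of_le hx1]
    exact Icc_subset_Ici_self
  have heq : F x - F (x - 1) = ∫ y in (x - 1)..x, f y :=
    intervalIntegral.integral_interval_sub_left hii1 hii2
  rw [heq, intervalIntegral.integral_of_le (by linarith)] at hxlt
  linarith
end

section
/- Let h : [0,∞) → ℝ and g : [0,∞) → [0,∞) be locally Lipschitz continuous with h(0) = g(0) = 0, let g be strictly positive on (0,∞) with limsup_{x→∞} √(g(x))/x < ∞, and suppose there exists y₀ > 0 such that h ≥ 0 on [0,y₀] and h ≤ 0 on [y₀,∞). Let α > 0 and θ > 0. Then ∫_0^∞ (1/g(y)) exp( ∫_{y₀}^y (α(θ−x)+h(x))/g(x) dx ) dy < ∞, where for y < y₀ the inner integral is interpreted as −∫_y^{y₀}. -/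
open Filter Set MeasureTheory intervalIntegral

/-- `f` is locally Lipschitz continuous on the set `s`. -/
def LocLipOn (f : ℝ → ℝ) (s : Set ℝ) : Prop :=
  ∀ x ∈ s, ∃ (K : NNReal) (t : Set ℝ), t ∈ nhdsWithin x s ∧ LipschitzOnWith K f t

private lemma locLip_cont {f : ℝ → ℝ} (hf : LocLipOn f (Ici 0)) {x : ℝ} (hx : 0 < x) :
    ContinuousAt f x := by
  obtain ⟨K, t, ht, hlip⟩ := hf x hx.le
  have hnh : nhdsWithin x (Ici 0) = nhds x := nhdsWithin_eq_nhds.mpr (Ici_mem_nhds hx)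
  rw [hnh] at ht
  exact hlip.continuousOn.continuousAt ht

/-- Normalizability of the equilibrium density (74) of the one-dimensional diffusion
`dV = α(θ-V)dt + h(V)dt + √(2g(V))dB` under Assumption A1 and condition (70). -/
theorem stmt3 (h g : ℝ → ℝ)
    (hhlip : LocLipOn h (Ici 0)) (hglip : LocLipOn g (Ici 0))
    (hh0 : h 0 = 0) (hg0 : g 0 = 0)
    (hgnn : ∀ x ∈ Ici (0:ℝ), 0 ≤ g x) (hgpos : ∀ x ∈ Ioi (0:ℝ), 0 < g x)
    (hgrow : ∃ Cg : ℝ, ∀ᶠ x in atTop, Real.sqrt (g x) / x ≤ Cg)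
    (y₀ : ℝ) (hy₀ : 0 < y₀)
    (hhge : ∀ x ∈ Icc (0:ℝ) y₀, 0 ≤ h x) (hhle : ∀ x ∈ Ici y₀, h x ≤ 0)
    (α θ : ℝ) (hα : 0 < α) (hθ : 0 < θ) :
    IntegrableOn
      (fun y => (1 / g y) * Real.exp (∫ x in y₀..y, (α * (θ - x) + h x) / g x))
      (Ioi 0) := by
  have hgC : ∀ x : ℝ, 0 < x → ContinuousAt g x := fun x hx => locLip_cont hglip hx
  have hhC : ∀ x : ℝ, 0 < x → ContinuousAt h x := fun x hx => locLip_cont hhlip hx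
  set f : ℝ → ℝ := fun x => (α * (θ - x) + h x) / g x with hfdef
  have hfC : ContinuousOn f (Ioi 0) := by
    intro x hx
    exact (((continuousAt_const.mul (continuousAt_const.sub continuousAt_id)).add
      (hhC x hx)).div (hgC x hx) (ne_of_gt (hgpos x hx))).continuousWithinAt
  have hsub : ∀ {c d : ℝ}, 0 < c → 0 < d → uIcc c d ⊆ Ioi 0 := by
    intro c d hc hd x hx
    exact lt_of_lt_of_le (lt_min hc hd) hx.1
  have hIccsub : ∀ {c d : ℝ}, 0 < c → Icc c d ⊆ Ioi 0 := by
    intro c d hc x hx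
    exact lt_of_lt_of_le hc hx.1
  have hfint : ∀ {c d : ℝ}, 0 < c → 0 < d → IntervalIntegrable f volume c d :=
    fun hc hd => (hfC.mono (hsub hc hd)).intervalIntegrable
  set F : ℝ → ℝ := fun y => ∫ x in y₀..y, f x with hFdef
  have hFd : ∀ y : ℝ, 0 < y → HasDerivAt F (f y) y := by
    intro y hy
    exact intervalIntegral.integral_hasDerivAt_right (hfint hy₀ hy)
      (hfC.stronglyMeasurableAtFilter isOpen_Ioi y hy)
      ((hfC y hy).continuousAt (Ioi_mem_nhds hy))
  have hEd : ∀ y : ℝ, 0 < y →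
      HasDerivAt (fun z => Real.exp (F z)) (Real.exp (F y) * f y) y :=
    fun y hy => (hFd y hy).exp
  have hFC : ContinuousOn F (Ioi 0) :=
    fun y hy => ((hFd y hy).continuousAt).continuousWithinAt
  set Φ : ℝ → ℝ := fun y => (1 / g y) * Real.exp (F y) with hΦdef
  have hgCo : ContinuousOn g (Ioi 0) := fun x hx => (hgC x hx).continuousWithinAt
  have hΦC : ContinuousOn Φ (Ioi 0) :=
    (continuousOn_const.div hgCo fun x hx => ne_of_gt (hgpos x hx)).mul
      (Real.continuous_exp.comp_continuousOn hFC)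
  have hΦnn : ∀ y : ℝ, 0 < y → 0 ≤ Φ y := by
    intro y hy
    have := (hgpos y hy).le
    exact mul_nonneg (by positivity) (Real.exp_pos _).le
  have hEC : ∀ {c d : ℝ}, 0 < c → 0 < d →
      IntervalIntegrable (fun x => Real.exp (F x) * f x) volume c d := by
    intro c d hc hd
    exact (((Real.continuous_exp.comp_continuousOn (hFC.mono (hsub hc hd))).mul
      (hfC.mono (hsub hc hd)))).intervalIntegrable
  set a : ℝ := min (θ / 2) y₀ with hadef
  have ha0 : 0 < a := lt_min (half_pos hθ) hy₀
  have hay : a ≤ y₀ := min_le_right _ _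
  set b : ℝ := max (2 * θ) y₀ with hbdef
  have hb0 : 0 < b := lt_of_lt_of_le hy₀ (le_max_right _ _)
  have hyb : y₀ ≤ b := le_max_right _ _
  have hab : a ≤ b := hay.trans hyb
  -- key pointwise bounds
  have keyL : ∀ y : ℝ, 0 < y → y ≤ a → Φ y ≤ (2 / (α * θ)) * (Real.exp (F y) * f y) := by
    intro y hy hya
    have hgy := hgpos y hy
    have hhy : 0 ≤ h y := hhge y ⟨hy.le, hya.trans hay⟩
    have hyθ : y ≤ θ / 2 := hya.trans (min_le_left _ _)
    have hdr : α * θ / 2 ≤ α * (θ - y) + h y := by nlinarith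
    have heq : (2 / (α * θ)) * (Real.exp (F y) * ((α * (θ - y) + h y) / g y)) =
        ((2 / (α * θ)) * (α * (θ - y) + h y)) * ((1 / g y) * Real.exp (F y)) := by
      field_simp
    have h2 : 1 ≤ (2 / (α * θ)) * (α * (θ - y) + h y) := by
      rw [div_mul_eq_mul_div, le_div_iff₀ (by positivity)]
      nlinarith
    calc Φ y ≤ ((2 / (α * θ)) * (α * (θ - y) + h y)) * Φ y :=
          le_mul_of_one_le_left (hΦnn y hy) h2
      _ = (2 / (α * θ)) * (Real.exp (F y) * f y) := by rw [hΦdef, hfdef]; dsimp only; rw [heq]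
  have keyR : ∀ y : ℝ, b ≤ y → Φ y ≤ (1 / (α * θ)) * (-(Real.exp (F y) * f y)) := by
    intro y hby
    have hy : 0 < y := lt_of_lt_of_le hb0 hby
    have hgy := hgpos y hy
    have hhy : h y ≤ 0 := hhle y (hyb.trans hby)
    have hyθ : 2 * θ ≤ y := (le_max_left _ _).trans hby
    have hdr : α * (θ - y) + h y ≤ -(α * θ) := by nlinarith
    have heq : (1 / (α * θ)) * (-(Real.exp (F y) * ((α * (θ - y) + h y) / g y))) =
        ((1 / (α * θ)) * (-(α * (θ - y) + h y))) * ((1 / g y) * Real.exp (F y)) := by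
      field_simp
    have h2 : 1 ≤ (1 / (α * θ)) * (-(α * (θ - y) + h y)) := by
      rw [div_mul_eq_mul_div, le_div_iff₀ (by positivity)]
      nlinarith
    calc Φ y ≤ ((1 / (α * θ)) * (-(α * (θ - y) + h y))) * Φ y :=
          le_mul_of_one_le_left (hΦnn y hy) h2
      _ = (1 / (α * θ)) * (-(Real.exp (F y) * f y)) := by
          rw [hΦdef, hfdef]; dsimp only; rw [heq]
  -- integral bound on the left piece
  have IL : ∀ ε : ℝ, 0 < ε → ε ≤ a →
      (∫ x in Ioc ε a, ‖Φ x‖) ≤ (2 / (α * θ)) * Real.exp (F a) := by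
    intro ε hε hεa
    have hmem : ∀ x ∈ uIcc ε a, x ∈ Ioi (0:ℝ) := by
      rw [uIcc_of_le hεa]; exact fun x hx => hIccsub hε hx
    have intΦ : IntervalIntegrable Φ volume ε a := (hΦC.mono (hsub hε ha0)).intervalIntegrable
    have intE : IntervalIntegrable (fun x => Real.exp (F x) * f x) volume ε a := hEC hε ha0
    have intE' : IntervalIntegrable (fun x => (2 / (α * θ)) * (Real.exp (F x) * f x))
        volume ε a := intE.const_mul _
    rw [← intervalIntegral.integral_of_le hεa]
    calc (∫ x in ε..a, ‖Φ x‖) = ∫ x in ε..a, Φ x := by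
          refine intervalIntegral.integral_congr fun x hx => ?_
          exact Real.norm_of_nonneg (hΦnn x (hmem x hx))
      _ ≤ ∫ x in ε..a, (2 / (α * θ)) * (Real.exp (F x) * f x) := by
          refine intervalIntegral.integral_mono_on hεa intΦ intE' fun x hx => ?_
          exact keyL x (hIccsub hε hx) hx.2
      _ = (2 / (α * θ)) * ∫ x in ε..a, Real.exp (F x) * f x :=
          intervalIntegral.integral_const_mul _ _
      _ = (2 / (α * θ)) * (Real.exp (F a) - Real.exp (F ε)) := by
          rw [intervalIntegral.integral_eq_sub_of_hasDerivAt
            (fun x hx => hEd x (hmem x hx)) intE]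
      _ ≤ (2 / (α * θ)) * Real.exp (F a) := by
          have h1 := (Real.exp_pos (F ε)).le
          have h2 : (0:ℝ) ≤ 2 / (α * θ) := by positivity
          nlinarith
  -- integral bound on the right piece
  have IR : ∀ R : ℝ, b ≤ R → (∫ x in b..R, ‖Φ x‖) ≤ (1 / (α * θ)) * Real.exp (F b) := by
    intro R hbR
    have hR0 : 0 < R := lt_of_lt_of_le hb0 hbR
    have hmem : ∀ x ∈ uIcc b R, x ∈ Ioi (0:ℝ) := by
      rw [uIcc_of_le hbR]; exact fun x hx => hIccsub hb0 hx
    have intΦ : IntervalIntegrable Φ volume b R := (hΦC.mono (hsub hb0 hR0)).intervalIntegrable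
    have intE : IntervalIntegrable (fun x => Real.exp (F x) * f x) volume b R := hEC hb0 hR0
    have intE' : IntervalIntegrable (fun x => (1 / (α * θ)) * (-(Real.exp (F x) * f x)))
        volume b R := (intE.neg).const_mul _
    calc (∫ x in b..R, ‖Φ x‖) = ∫ x in b..R, Φ x := by
          refine intervalIntegral.integral_congr fun x hx => ?_
          exact Real.norm_of_nonneg (hΦnn x (hmem x hx))
      _ ≤ ∫ x in b..R, (1 / (α * θ)) * (-(Real.exp (F x) * f x)) := by
          refine intervalIntegral.integral_mono_on hbR intΦ intE' fun x hx => ?_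
          exact keyR x hx.1
      _ = (1 / (α * θ)) * ∫ x in b..R, -(Real.exp (F x) * f x) :=
          intervalIntegral.integral_const_mul _ _
      _ = (1 / (α * θ)) * -(Real.exp (F R) - Real.exp (F b)) := by
          rw [intervalIntegral.integral_neg, intervalIntegral.integral_eq_sub_of_hasDerivAt
            (fun x hx => hEd x (hmem x hx)) intE]
      _ ≤ (1 / (α * θ)) * Real.exp (F b) := by
          have h1 := (Real.exp_pos (F R)).le
          have h2 : (0:ℝ) ≤ 1 / (α * θ) := by positivity
          nlinarith
  -- integrability on the three pieces
  have hΦIcc : ∀ {c d : ℝ}, 0 < c → IntegrableOn Φ (Icc c d) := by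
    intro c d hc
    exact (hΦC.mono (hIccsub hc)).integrableOn_Icc
  have left : IntegrableOn Φ (Ioc 0 a) := by
    refine integrableOn_Ioc_of_intervalIntegral_norm_bounded_left
      (I := (2 / (α * θ)) * Real.exp (F a)) (a := fun n : ℕ => a / (n + 1)) (b := a)
      (l := atTop) (fun n => ?_) ?_ ?_
    · exact (hΦIcc (by positivity)).mono_set Ioc_subset_Icc_self
    · have h1 : Tendsto (fun n : ℕ => a * (1 / ((n : ℝ) + 1))) atTop (nhds (a * 0)) :=
        tendsto_one_div_add_atTop_nhds_zero_nat.const_mul a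
      simpa [mul_one_div, div_eq_mul_inv] using h1
    · refine Eventually.of_forall fun n => ?_
      refine IL _ (by positivity) ?_
      refine div_le_self ha0.le ?_
      have : (0:ℝ) ≤ (n : ℝ) := Nat.cast_nonneg n
      linarith
  have mid : IntegrableOn Φ (Ioc a b) := (hΦIcc ha0).mono_set Ioc_subset_Icc_self
  have right : IntegrableOn Φ (Ioi b) := by
    refine integrableOn_Ioi_of_intervalIntegral_norm_bounded
      ((1 / (α * θ)) * Real.exp (F b)) b (b := fun R : ℝ => R) (l := atTop)
      (fun i => ?_) tendsto_id ?_
    · rcases le_or_gt i b with hib | hbi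
      · rw [Ioc_eq_empty (not_lt.mpr hib)]
        exact integrableOn_empty
      · exact (hΦIcc hb0).mono_set Ioc_subset_Icc_self
    · filter_upwards [eventually_ge_atTop b] with i hi
      exact IR i hi
  have hunion : Ioc 0 a ∪ Ioc a b ∪ Ioi b = Ioi 0 := by
    rw [Ioc_union_Ioc_eq_Ioc ha0.le hab, Ioc_union_Ioi_eq_Ioi hb0.le]
  have : IntegrableOn Φ (Ioi 0) := by
    rw [← hunion]
    exact (left.union mid).union right
  exact this
end

section
/- Let h, g satisfy Assumption A1 and condition (70), and let α > 0 and θ > 0. Define Φ_θ(y) := (1/g(y)) exp( ∫_{y₀}^y (α(θ−x)+h(x))/g(x) dx ) for y > 0. Then both ∫_0^∞ α(y−θ) Φ_θ(y) dy and ∫_0^∞ h(y) Φ_θ(y) dy converge absolutely and ∫_0^∞ α(y−θ) Φ_θ(y) dy = ∫_0^∞ h(y) Φ_θ(y) dy. -/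
open Filter Set MeasureTheory intervalIntegral

open Topology

set_option maxHeartbeats 1000000

lemma aux_integrableOn_Ioc_deriv_of_nonneg (f f' : ℝ → ℝ) (a b l : ℝ) (hab : a < b)
    (hderiv : ∀ x ∈ Set.Ioc a b, HasDerivAt f (f' x) x)
    (hcont : ContinuousOn f' (Set.Ioc a b))
    (hpos : ∀ x ∈ Set.Ioc a b, 0 ≤ f' x)
    (hl : Tendsto f (nhdsWithin a (Set.Ioi a)) (nhds l)) :
    IntegrableOn f' (Set.Ioc a b) ∧ ∫ x in Set.Ioc a b, f' x = f b - l := by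
  set aseq : ℕ → ℝ := fun n => a + (b - a) / (n + 1) with haseq
  have hba : (0:ℝ) < b - a := sub_pos.2 hab
  have ha_lt : ∀ n, a < aseq n := by
    intro n
    have : (0:ℝ) < (b - a) / (n + 1) := by positivity
    simp [haseq]; linarith
  have ha_le : ∀ n, aseq n ≤ b := by
    intro n
    have : (b - a) / (n + 1) ≤ b - a := by
      apply div_le_self hba.le
      have : (0:ℝ) ≤ (n:ℝ) := Nat.cast_nonneg n
      linarith
    simp [haseq]; linarith
  have htend : Tendsto aseq atTop (𝓝 a) := by
    have h0 : Tendsto (fun n : ℕ => (b - a) * (1 / ((n:ℝ) + 1))) atTop (𝓝 ((b-a) * 0)) :=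
      tendsto_one_div_add_atTop_nhds_zero_nat.const_mul (b - a)
    have : Tendsto (fun n : ℕ => (b - a) / ((n:ℝ) + 1)) atTop (𝓝 0) := by
      simpa [div_eq_mul_inv] using h0
    simpa using tendsto_const_nhds.add this
  have htendw : Tendsto aseq atTop (𝓝[>] a) :=
    tendsto_nhdsWithin_of_tendsto_nhds_of_eventually_within _ htend
      (Eventually.of_forall fun n => ha_lt n)
  have hsub : ∀ n, Icc (aseq n) b ⊆ Ioc a b :=
    fun n x hx => ⟨lt_of_lt_of_le (ha_lt n) hx.1, hx.2⟩
  have key : ∀ n, ∫ x in Ioc (aseq n) b, f' x = f b - f (aseq n) := by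
    intro n
    have hci : ContinuousOn f' (uIcc (aseq n) b) := by
      rw [uIcc_of_le (ha_le n)]; exact hcont.mono (hsub n)
    have heq := intervalIntegral.integral_eq_sub_of_hasDerivAt
        (f := f) (f' := f') (a := aseq n) (b := b)
        (fun x hx => hderiv x ((hsub n) (by rwa [uIcc_of_le (ha_le n)] at hx)))
        hci.intervalIntegrable
    rwa [intervalIntegral.integral_of_le (ha_le n)] at heq
  have hfge : ∀ x ∈ Ioc a b, l ≤ f x := by
    intro x hx
    have mono : ∀ y ∈ Ioo a x, f y ≤ f x := by
      intro y hy
      have hyx : y ≤ x := hy.2.le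
      have hsub2 : Icc y x ⊆ Ioc a b := fun z hz =>
        ⟨lt_of_lt_of_le hy.1 hz.1, le_trans hz.2 hx.2⟩
      have hci : ContinuousOn f' (uIcc y x) := by
        rw [uIcc_of_le hyx]; exact hcont.mono hsub2
      have heq := intervalIntegral.integral_eq_sub_of_hasDerivAt
          (f := f) (f' := f') (a := y) (b := x)
          (fun z hz => hderiv z (hsub2 (by rwa [uIcc_of_le hyx] at hz)))
          hci.intervalIntegrable
      have hnn : 0 ≤ ∫ z in y..x, f' z :=
        intervalIntegral.integral_nonneg hyx
          (fun z hz => hpos z (hsub2 hz))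
      linarith [heq ▸ hnn]
    refine le_of_tendsto hl ?_
    filter_upwards [Ioo_mem_nhdsGT_of_mem ⟨le_refl a, hx.1⟩] with y hy using mono y hy
  have hfi : ∀ n, IntegrableOn f' (Ioc (aseq n) b) := by
    intro n
    exact ((hcont.mono (hsub n)).integrableOn_Icc).mono_set Ioc_subset_Icc_self
  have hcover : AECover (volume.restrict (Ioc a b)) atTop (fun n => Ioc (aseq n) b) :=
    aecover_Ioc_of_Ioc htend tendsto_const_nhds
  have hres : ∀ n, (volume.restrict (Ioc a b)).restrict (Ioc (aseq n) b)
      = volume.restrict (Ioc (aseq n) b) := by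
    intro n
    rw [Measure.restrict_restrict measurableSet_Ioc,
      inter_eq_self_of_subset_left (Ioc_subset_Ioc_left (ha_lt n).le)]
  have hfi' : ∀ n, IntegrableOn f' (Ioc (aseq n) b) (volume.restrict (Ioc a b)) := by
    intro n
    rw [IntegrableOn, hres n]; exact hfi n
  have hInt : IntegrableOn f' (Ioc a b) := by
    apply hcover.integrable_of_integral_norm_bounded (f b - l) hfi'
    apply Eventually.of_forall
    intro n
    rw [show (∫ x in Ioc (aseq n) b, ‖f' x‖ ∂(volume.restrict (Ioc a b)))
        = ∫ x in Ioc (aseq n) b, ‖f' x‖ from by rw [hres n]]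
    have hb1 : ∫ x in Ioc (aseq n) b, ‖f' x‖ = ∫ x in Ioc (aseq n) b, f' x :=
      setIntegral_congr_fun measurableSet_Ioc
        (fun y hy => Real.norm_of_nonneg (hpos y ⟨(ha_lt n).trans hy.1, hy.2⟩))
    rw [hb1, key n]
    have := hfge (aseq n) ⟨ha_lt n, ha_le n⟩
    linarith
  refine ⟨hInt, ?_⟩
  have h1 : Tendsto (fun n => ∫ x in Ioc (aseq n) b, f' x) atTop
      (𝓝 (∫ x in Ioc a b, f' x)) := by
    have := hcover.integral_tendsto_of_countably_generated hInt
    simpa only [hres] using this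
  have h2 : Tendsto (fun n => ∫ x in Ioc (aseq n) b, f' x) atTop (𝓝 (f b - l)) := by
    simp_rw [key]
    exact tendsto_const_nhds.sub (hl.comp htendw)
  exact tendsto_nhds_unique h1 h2


/-- The integration-by-parts identity (76)–(79): for the equilibrium density `Φ_θ`,
both `∫_0^∞ α(y-θ)Φ_θ(y) dy` and `∫_0^∞ h(y)Φ_θ(y) dy` converge absolutely and
coincide. -/
theorem stmt6 (h g : ℝ → ℝ)
    (hhlip : LocLipOn h (Ici 0)) (hglip : LocLipOn g (Ici 0))
    (hh0 : h 0 = 0) (hg0 : g 0 = 0)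
    (hgnn : ∀ x ∈ Ici (0:ℝ), 0 ≤ g x) (hgpos : ∀ x ∈ Ioi (0:ℝ), 0 < g x)
    (hgrow : ∃ Cg : ℝ, ∀ᶠ x in atTop, Real.sqrt (g x) / x ≤ Cg)
    (y₀ : ℝ) (hy₀ : 0 < y₀)
    (hhge : ∀ x ∈ Icc (0:ℝ) y₀, 0 ≤ h x) (hhle : ∀ x ∈ Ici y₀, h x ≤ 0)
    (α θ : ℝ) (hα : 0 < α) (hθ : 0 < θ)
    (Φ : ℝ → ℝ)
    (hΦ : ∀ y, Φ y = (1 / g y) * Real.exp (∫ x in y₀..y, (α * (θ - x) + h x) / g x)) :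
    IntegrableOn (fun y => α * (y - θ) * Φ y) (Ioi 0) ∧
    IntegrableOn (fun y => h y * Φ y) (Ioi 0) ∧
    ∫ y in Ioi (0:ℝ), α * (y - θ) * Φ y = ∫ y in Ioi (0:ℝ), h y * Φ y := by
  -- continuity of h and g
  have hcont_of_lip : ∀ f : ℝ → ℝ, LocLipOn f (Ici 0) → ContinuousOn f (Ici 0) := by
    intro f hf x hx
    obtain ⟨K, t, ht, hlip⟩ := hf x hx
    exact (hlip.continuousOn.continuousWithinAt (mem_of_mem_nhdsWithin hx ht)).mono_of_mem_nhdsWithin ht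
  have hcg : ContinuousOn g (Ici 0) := hcont_of_lip g hglip
  have hch : ContinuousOn h (Ici 0) := hcont_of_lip h hhlip
  have hIci_mem : ∀ x : ℝ, 0 < x → Ici (0:ℝ) ∈ 𝓝 x := fun x hx =>
    mem_of_superset (Ioi_mem_nhds hx) Ioi_subset_Ici_self
  have hgat : ∀ x : ℝ, 0 < x → ContinuousAt g x := fun x hx => hcg.continuousAt (hIci_mem x hx)
  have hhat : ∀ x : ℝ, 0 < x → ContinuousAt h x := fun x hx => hch.continuousAt (hIci_mem x hx)
  set ψ : ℝ → ℝ := fun x => (α * (θ - x) + h x) / g x with hψdef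
  have hψat : ∀ x : ℝ, 0 < x → ContinuousAt ψ x := by
    intro x hx
    exact (((continuousAt_const.mul ((continuousAt_const.sub continuousAt_id))).add
      (hhat x hx)).div (hgat x hx) (hgpos x hx).ne')
  have hψc : ContinuousOn ψ (Ioi 0) := fun x hx => (hψat x hx).continuousWithinAt
  -- interval integrability of ψ on positive intervals
  have hψint : ∀ u v : ℝ, 0 < u → 0 < v → IntervalIntegrable ψ volume u v := by
    intro u v hu hv
    apply ContinuousOn.intervalIntegrable
    apply hψc.mono
    intro z hz
    exact lt_of_lt_of_le (lt_inf_iff.mpr ⟨hu, hv⟩) hz.1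
  set F : ℝ → ℝ := fun y => Real.exp (∫ x in y₀..y, ψ x) with hFdef
  have hFpos : ∀ y, 0 < F y := fun y => Real.exp_pos _
  have hΦF : ∀ y, Φ y = (1 / g y) * F y := fun y => hΦ y
  have hΦnn : ∀ y ∈ Ioi (0:ℝ), 0 ≤ Φ y := by
    intro y hy
    rw [hΦF y]
    have := hgpos y hy
    positivity
  set F' : ℝ → ℝ := fun y => ψ y * F y with hF'def
  have hF : ∀ y ∈ Ioi (0:ℝ), HasDerivAt F (F' y) y := by
    intro y hy
    have hInt : IntervalIntegrable ψ volume y₀ y := hψint y₀ y hy₀ hy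
    have hD : HasDerivAt (fun u => ∫ x in y₀..u, ψ x) (ψ y) y :=
      intervalIntegral.integral_hasDerivAt_right hInt
        (hψc.stronglyMeasurableAtFilter isOpen_Ioi y hy) (hψat y hy)
    simpa [hF'def, mul_comm] using hD.exp
  have hF'eq : ∀ y, F' y = h y * Φ y - α * (y - θ) * Φ y := by
    intro y
    rw [hF'def, hΦF y, hψdef]
    simp only [div_eq_mul_inv, one_div]
    ring
  have hFc : ContinuousOn F (Ioi 0) := fun x hx => (hF x hx).continuousAt.continuousWithinAt
  have hF'c : ContinuousOn F' (Ioi 0) := hψc.mul hFc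
  -- limit of F at 0 from the right
  have hF0 : Tendsto F (𝓝[>] (0:ℝ)) (𝓝 0) := by
    obtain ⟨K, t, ht, hlip⟩ := hglip 0 self_mem_Ici
    obtain ⟨δ, hδpos, hδ⟩ := Metric.mem_nhdsWithin_iff.mp ht
    set K' : ℝ := (K:ℝ) + 1 with hK'def
    have hK' : 0 < K' := by positivity
    set δ' : ℝ := min (δ/2) (min y₀ (θ/2)) with hδ'def
    have hδ'pos : 0 < δ' := lt_min (by linarith) (lt_min hy₀ (by linarith))
    have hδ'y₀ : δ' ≤ y₀ := le_trans (min_le_right _ _) (min_le_left _ _)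
    have hδ'θ : δ' ≤ θ/2 := le_trans (min_le_right _ _) (min_le_right _ _)
    have hδ'δ : δ' < δ := lt_of_le_of_lt (min_le_left _ _) (by linarith)
    have hgle : ∀ x ∈ Ioc (0:ℝ) δ', g x ≤ K' * x := by
      intro x hx
      have hxb : x ∈ Metric.ball (0:ℝ) δ := by
        rw [Metric.mem_ball, Real.dist_eq, sub_zero, abs_of_pos hx.1]
        exact lt_of_le_of_lt hx.2 hδ'δ
      have hxt : x ∈ t := hδ ⟨hxb, hx.1.le⟩
      have h0t : (0:ℝ) ∈ t := hδ ⟨Metric.mem_ball_self hδpos, self_mem_Ici⟩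
      have hd := hlip.dist_le_mul x hxt 0 h0t
      rw [hg0, Real.dist_eq, Real.dist_eq, sub_zero, sub_zero, abs_of_pos hx.1] at hd
      have : |g x| = g x := abs_of_nonneg (hgnn x hx.1.le)
      calc g x = |g x| := this.symm
        _ ≤ (K:ℝ) * x := hd
        _ ≤ K' * x := by nlinarith [hx.1]
    set c₂ : ℝ := α * θ / (2 * K') with hc₂def
    have hc₂ : 0 < c₂ := by positivity
    have hψlb : ∀ x ∈ Ioc (0:ℝ) δ', c₂ * x⁻¹ ≤ ψ x := by
      intro x hx
      have hgx : 0 < g x := hgpos x hx.1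
      have hgK : g x ≤ K' * x := hgle x hx
      have hnum : α * θ / 2 ≤ α * (θ - x) + h x := by
        have h2 : 0 ≤ h x := hhge x ⟨hx.1.le, hx.2.trans hδ'y₀⟩
        have h3 : x ≤ θ/2 := hx.2.trans hδ'θ
        nlinarith
      have step1 : c₂ * x⁻¹ = (α*θ/2) / (K' * x) := by
        rw [hc₂def]; field_simp
      have step2 : (α*θ/2) / (K' * x) ≤ (α*θ/2) / g x := by
        apply div_le_div_of_nonneg_left (by positivity) hgx hgK
      have step3 : (α*θ/2) / g x ≤ (α * (θ - x) + h x) / g x :=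
        (div_le_div_iff_of_pos_right hgx).mpr hnum
      rw [step1, hψdef]
      exact le_trans step2 step3
    have hCδ : ∀ y ∈ Ioo (0:ℝ) δ', F y ≤
        Real.exp (c₂ * Real.log y + (-(∫ x in δ'..y₀, ψ x) - c₂ * Real.log δ')) := by
      intro y hy
      have hy1 : 0 < y := hy.1
      have hy2 : y < δ' := hy.2
      have hinv : IntervalIntegrable (fun x => c₂ * x⁻¹) volume y δ' := by
        apply IntervalIntegrable.const_mul
        apply intervalIntegrable_inv
        · intro x hx
          rcases hx with ⟨hx1, _⟩
          rw [min_def] at hx1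
          split_ifs at hx1 <;> nlinarith
        · exact continuousOn_id
      have hmono := intervalIntegral.integral_mono_on hy2.le hinv
        ((hψint y δ' hy1 hδ'pos)) (fun x hx => hψlb x ⟨lt_of_lt_of_le hy1 hx.1, hx.2⟩)
      have hval : ∫ x in y..δ', c₂ * x⁻¹ = c₂ * (Real.log δ' - Real.log y) := by
        rw [intervalIntegral.integral_const_mul, integral_inv_of_pos hy1 hδ'pos,
          Real.log_div hδ'pos.ne' hy1.ne']
      have e2 : ∫ x in y..y₀, ψ x = (∫ x in y..δ', ψ x) + ∫ x in δ'..y₀, ψ x :=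
        (intervalIntegral.integral_add_adjacent_intervals
          (hψint y δ' hy1 hδ'pos) (hψint δ' y₀ hδ'pos hy₀)).symm
      have e1 : (∫ x in y₀..y, ψ x) = -(∫ x in y..y₀, ψ x) :=
        intervalIntegral.integral_symm y y₀
      rw [hFdef]
      apply Real.exp_le_exp.mpr
      rw [e1, e2]
      rw [hval] at hmono
      linarith
    have hlim : Tendsto (fun y : ℝ =>
        Real.exp (c₂ * Real.log y + (-(∫ x in δ'..y₀, ψ x) - c₂ * Real.log δ')))
        (𝓝[>] (0:ℝ)) (𝓝 0) := by
      apply Real.tendsto_exp_atBot.comp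
      apply tendsto_atBot_add_const_right
      exact (Real.tendsto_log_nhdsGT_zero).const_mul_atBot hc₂
    apply tendsto_of_tendsto_of_tendsto_of_le_of_le' tendsto_const_nhds hlim
    · exact Eventually.of_forall (fun y => (hFpos y).le)
    · filter_upwards [Ioo_mem_nhdsGT_of_mem ⟨le_refl (0:ℝ), hδ'pos⟩] with y hy
      exact hCδ y hy
  -- limit of F at infinity
  have hFtop : Tendsto F atTop (𝓝 0) := by
    obtain ⟨Cg, hCg⟩ := hgrow
    set C : ℝ := max Cg 1 with hCdef
    have hC : 0 < C := lt_of_lt_of_le one_pos (le_max_right _ _)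
    have hCg' : ∀ᶠ x in atTop, Real.sqrt (g x) / x ≤ C :=
      hCg.mono fun x hx => hx.trans (le_max_left _ _)
    obtain ⟨x₀, hx₀⟩ := eventually_atTop.mp hCg'
    set x₁ : ℝ := max x₀ (max y₀ (2*θ)) with hx₁def
    have hx₁y₀ : y₀ ≤ x₁ := le_trans (le_max_left _ _) (le_max_right _ _)
    have hx₁θ : 2*θ ≤ x₁ := le_trans (le_max_right _ _) (le_max_right _ _)
    have hx₁pos : 0 < x₁ := lt_of_lt_of_le hy₀ hx₁y₀
    have hgub : ∀ x, x₁ ≤ x → g x ≤ C^2 * x^2 := by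
      intro x hx
      have hxpos : 0 < x := lt_of_lt_of_le hx₁pos hx
      have h1 : Real.sqrt (g x) / x ≤ C := hx₀ x (le_trans (le_max_left _ _) hx)
      have h2 : Real.sqrt (g x) ≤ C * x := by rwa [div_le_iff₀ hxpos] at h1
      have h3 : 0 ≤ Real.sqrt (g x) := Real.sqrt_nonneg _
      nlinarith [Real.sq_sqrt (hgnn x hxpos.le)]
    set c₁ : ℝ := α / (2 * C^2) with hc₁def
    have hc₁ : 0 < c₁ := by positivity
    have hψub : ∀ x, x₁ ≤ x → ψ x ≤ -c₁ * x⁻¹ := by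
      intro x hx
      have hxpos : 0 < x := lt_of_lt_of_le hx₁pos hx
      have hgx : 0 < g x := hgpos x hxpos
      have hnum : α * (θ - x) + h x ≤ -(α * x / 2) := by
        have hh : h x ≤ 0 := hhle x (le_trans hx₁y₀ hx)
        have hx2θ : 2*θ ≤ x := le_trans hx₁θ hx
        nlinarith
      have step1 : ψ x ≤ (-(α * x / 2)) / g x := by
        rw [hψdef]
        exact (div_le_div_iff_of_pos_right hgx).mpr hnum
      have step2 : (-(α * x / 2)) / g x ≤ (-(α * x / 2)) / (C^2 * x^2) := by
        rw [div_le_div_iff₀ hgx (by positivity)]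
        nlinarith [mul_le_mul_of_nonneg_left (hgub x hx) (show (0:ℝ) ≤ α*x/2 by positivity)]
      have step3 : (-(α * x / 2)) / (C^2 * x^2) = -c₁ * x⁻¹ := by
        rw [hc₁def]; field_simp
      linarith [step1, step2, step3.symm.le]
    have hbound : ∀ y, x₁ ≤ y → F y ≤
        Real.exp ((∫ x in y₀..x₁, ψ x) + c₁ * Real.log x₁ - c₁ * Real.log y) := by
      intro y hy
      have hypos : 0 < y := lt_of_lt_of_le hx₁pos hy
      have hinv : IntervalIntegrable (fun x => -c₁ * x⁻¹) volume x₁ y := by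
        apply IntervalIntegrable.const_mul
        apply intervalIntegrable_inv
        · intro x hx
          rcases hx with ⟨hx1, _⟩
          rw [min_def] at hx1
          split_ifs at hx1 <;> nlinarith
        · exact continuousOn_id
      have hmono := intervalIntegral.integral_mono_on hy
        (hψint x₁ y hx₁pos hypos) hinv
        (fun x hx => hψub x hx.1)
      have hval : ∫ x in x₁..y, -c₁ * x⁻¹ = -c₁ * (Real.log y - Real.log x₁) := by
        rw [intervalIntegral.integral_const_mul, integral_inv_of_pos hx₁pos hypos,
          Real.log_div hypos.ne' hx₁pos.ne']
      have e2 : ∫ x in y₀..y, ψ x = (∫ x in y₀..x₁, ψ x) + ∫ x in x₁..y, ψ x :=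
        (intervalIntegral.integral_add_adjacent_intervals
          (hψint y₀ x₁ hy₀ hx₁pos) (hψint x₁ y hx₁pos hypos)).symm
      rw [hFdef]
      apply Real.exp_le_exp.mpr
      rw [e2]
      rw [hval] at hmono
      linarith
    have hlim : Tendsto (fun y : ℝ =>
        Real.exp ((∫ x in y₀..x₁, ψ x) + c₁ * Real.log x₁ - c₁ * Real.log y))
        atTop (𝓝 0) := by
      apply Real.tendsto_exp_atBot.comp
      have h1 : Tendsto (fun y : ℝ => -(c₁ * Real.log y)) atTop atBot :=
        tendsto_neg_atTop_atBot.comp (Real.tendsto_log_atTop.const_mul_atTop hc₁)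
      have := tendsto_atBot_add_const_left atTop ((∫ x in y₀..x₁, ψ x) + c₁ * Real.log x₁) h1
      simpa [sub_eq_add_neg] using this
    apply tendsto_of_tendsto_of_tendsto_of_le_of_le' tendsto_const_nhds hlim
    · exact Eventually.of_forall (fun y => (hFpos y).le)
    · filter_upwards [eventually_ge_atTop x₁] with y hy
      exact hbound y hy
  -- the split points
  set m : ℝ := min y₀ θ with hmdef
  set M : ℝ := max y₀ θ with hMdef
  have hm : 0 < m := lt_min hy₀ hθ
  have hmM : m ≤ M := min_le_max
  have hM : 0 < M := hm.trans_le hmM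
  have hIocm : Ioc (0:ℝ) m ⊆ Ioi 0 := Ioc_subset_Ioi_self
  have hψnn : ∀ x ∈ Ioc (0:ℝ) m, 0 ≤ ψ x := by
    intro x hx
    apply div_nonneg _ (hgpos x (hIocm hx)).le
    have h1 : 0 ≤ α * (θ - x) := by
      have : x ≤ θ := le_trans hx.2 (min_le_right _ _)
      nlinarith
    have h2 : 0 ≤ h x := hhge x ⟨hx.1.le, le_trans hx.2 (min_le_left _ _)⟩
    linarith
  have hψnp : ∀ x ∈ Ioi M, ψ x ≤ 0 := by
    intro x hx
    apply div_nonpos_of_nonpos_of_nonneg _ (hgpos x (lt_trans hM hx)).le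
    have h1 : α * (θ - x) ≤ 0 := by
      have : θ ≤ x := le_trans (le_max_right y₀ θ) hx.le
      nlinarith
    have h2 : h x ≤ 0 := hhle x (le_trans (le_max_left y₀ θ) hx.le)
    linarith
  -- left piece
  obtain ⟨hInt₁, hEq₁⟩ := aux_integrableOn_Ioc_deriv_of_nonneg F F' 0 m 0 hm
    (fun x hx => hF x (hIocm hx)) (hF'c.mono hIocm)
    (fun x hx => mul_nonneg (hψnn x hx) (hFpos x).le) hF0
  -- middle piece
  have hsubmM : Icc m M ⊆ Ioi 0 := fun z hz => lt_of_lt_of_le hm hz.1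
  have hInt₂ : IntegrableOn F' (Ioc m M) :=
    ((hF'c.mono hsubmM).integrableOn_Icc).mono_set Ioc_subset_Icc_self
  have hEq₂ : ∫ x in Ioc m M, F' x = F M - F m := by
    have hci : ContinuousOn F' (uIcc m M) := by
      rw [uIcc_of_le hmM]; exact hF'c.mono hsubmM
    have heq := intervalIntegral.integral_eq_sub_of_hasDerivAt
      (f := F) (f' := F') (a := m) (b := M)
      (fun x hx => hF x (hsubmM (by rwa [uIcc_of_le hmM] at hx))) hci.intervalIntegrable
    rwa [intervalIntegral.integral_of_le hmM] at heq
  -- right piece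
  have hInt₃ : IntegrableOn F' (Ioi M) :=
    integrableOn_Ioi_deriv_of_nonpos ((hF M hM).continuousAt.continuousWithinAt)
      (fun x hx => hF x (lt_trans hM hx))
      (fun x hx => mul_nonpos_of_nonpos_of_nonneg (hψnp x hx) (hFpos x).le) hFtop
  have hEq₃ : ∫ x in Ioi M, F' x = 0 - F M :=
    integral_Ioi_of_hasDerivAt_of_nonpos ((hF M hM).continuousAt.continuousWithinAt)
      (fun x hx => hF x (lt_trans hM hx))
      (fun x hx => mul_nonpos_of_nonpos_of_nonneg (hψnp x hx) (hFpos x).le) hFtop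
  -- integrability of F' on Ioi 0 and vanishing of its integral
  have hsplit1 : Ioc (0:ℝ) m ∪ Ioc m M = Ioc 0 M := Ioc_union_Ioc_eq_Ioc hm.le hmM
  have hsplit2 : Ioc (0:ℝ) M ∪ Ioi M = Ioi 0 := Ioc_union_Ioi_eq_Ioi hM.le
  have hInt₁₂ : IntegrableOn F' (Ioc 0 M) := by
    rw [← hsplit1]; exact hInt₁.union hInt₂
  have hIntF' : IntegrableOn F' (Ioi 0) := by
    rw [← hsplit2]; exact hInt₁₂.union hInt₃
  have hdisj1 : Disjoint (Ioc (0:ℝ) m) (Ioc m M) := by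
    rw [Set.disjoint_left]; rintro x ⟨_, h1⟩ ⟨h2, _⟩; exact absurd h2 (not_lt.2 h1)
  have hdisj2 : Disjoint (Ioc (0:ℝ) M) (Ioi M) := by
    rw [Set.disjoint_left]; rintro x ⟨_, h1⟩ h2; exact absurd h2 (not_lt.2 h1)
  have hIzero : ∫ x in Ioi (0:ℝ), F' x = 0 := by
    rw [← hsplit2, setIntegral_union hdisj2 measurableSet_Ioi hInt₁₂ hInt₃,
      ← hsplit1, setIntegral_union hdisj1 measurableSet_Ioc hInt₁ hInt₂,
      hEq₁, hEq₂, hEq₃]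
    ring
  -- separate integrability of the two functions
  set u : ℝ → ℝ := fun y => α * (y - θ) * Φ y with hudef
  set v : ℝ → ℝ := fun y => h y * Φ y with hvdef
  have huv : ∀ y, u y - v y = -F' y := by
    intro y; rw [hF'eq y]; ring
  have h1g : ContinuousOn (fun y => 1 / g y) (Ioi 0) := fun x hx =>
    ((continuousAt_const.div (hgat x hx) (hgpos x hx).ne')).continuousWithinAt
  have hΦc : ContinuousOn Φ (Ioi 0) := (h1g.mul hFc).congr (fun y _ => hΦF y)
  have huc : ContinuousOn u (Ioi 0) :=
    ((continuous_const.mul (continuous_id.sub continuous_const)).continuousOn).mul hΦc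
  have hvc : ContinuousOn v (Ioi 0) := (hch.mono Ioi_subset_Ici_self).mul hΦc
  have hmθ : m ≤ θ := min_le_right _ _
  have hθM : θ ≤ M := le_max_right _ _
  have hy₀M : y₀ ≤ M := le_max_left _ _
  -- sign information on the two pieces
  have husign1 : ∀ y ∈ Ioc (0:ℝ) m, u y ≤ 0 := fun y hy =>
    mul_nonpos_of_nonpos_of_nonneg (by nlinarith [hy.2]) (hΦnn y (hIocm hy))
  have hvsign1 : ∀ y ∈ Ioc (0:ℝ) m, 0 ≤ v y := fun y hy =>
    mul_nonneg (hhge y ⟨hy.1.le, hy.2.trans (min_le_left _ _)⟩) (hΦnn y (hIocm hy))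
  have husign3 : ∀ y ∈ Ioi M, 0 ≤ u y := fun y hy =>
    mul_nonneg (by nlinarith [hy.out]) (hΦnn y (lt_trans hM hy))
  have hvsign3 : ∀ y ∈ Ioi M, v y ≤ 0 := fun y hy =>
    mul_nonpos_of_nonpos_of_nonneg (hhle y (le_trans hy₀M hy.out.le))
      (hΦnn y (lt_trans hM hy))
  have hF'vu : ∀ y, F' y = v y - u y := fun y => hF'eq y
  -- integrability combinator
  have key : ∀ w : ℝ → ℝ, ContinuousOn w (Ioi 0) →
      (∀ y ∈ Ioc (0:ℝ) m, ‖w y‖ ≤ ‖F' y‖) → (∀ y ∈ Ioi M, ‖w y‖ ≤ ‖F' y‖) →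
      IntegrableOn w (Ioi 0) := by
    intro w hwc hb1 hb3
    have i1 : IntegrableOn w (Ioc 0 m) := by
      apply Integrable.mono hInt₁ ((hwc.mono hIocm).aestronglyMeasurable measurableSet_Ioc)
      filter_upwards [ae_restrict_mem measurableSet_Ioc] with y hy using hb1 y hy
    have i2 : IntegrableOn w (Ioc m M) :=
      ((hwc.mono hsubmM).integrableOn_Icc).mono_set Ioc_subset_Icc_self
    have i3 : IntegrableOn w (Ioi M) := by
      apply Integrable.mono hInt₃
        ((hwc.mono (fun z hz => lt_trans hM hz)).aestronglyMeasurable measurableSet_Ioi)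
      filter_upwards [ae_restrict_mem measurableSet_Ioi] with y hy using hb3 y hy
    rw [← hsplit2, ← hsplit1]
    exact (i1.union i2).union i3
  have hu_int : IntegrableOn u (Ioi 0) := by
    apply key u huc
    · intro y hy
      have h1 := husign1 y hy
      have h2 := hvsign1 y hy
      have h3 : 0 ≤ F' y := by rw [hF'vu y]; linarith
      rw [Real.norm_eq_abs, Real.norm_eq_abs, abs_of_nonpos h1, abs_of_nonneg h3, hF'vu y]
      linarith
    · intro y hy
      have h1 := husign3 y hy
      have h2 := hvsign3 y hy
      have h3 : F' y ≤ 0 := by rw [hF'vu y]; linarith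
      rw [Real.norm_eq_abs, Real.norm_eq_abs, abs_of_nonneg h1, abs_of_nonpos h3, hF'vu y]
      linarith
  have hv_int : IntegrableOn v (Ioi 0) := by
    apply key v hvc
    · intro y hy
      have h1 := husign1 y hy
      have h2 := hvsign1 y hy
      have h3 : 0 ≤ F' y := by rw [hF'vu y]; linarith
      rw [Real.norm_eq_abs, Real.norm_eq_abs, abs_of_nonneg h2, abs_of_nonneg h3, hF'vu y]
      linarith
    · intro y hy
      have h1 := husign3 y hy
      have h2 := hvsign3 y hy
      have h3 : F' y ≤ 0 := by rw [hF'vu y]; linarith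
      rw [Real.norm_eq_abs, Real.norm_eq_abs, abs_of_nonpos h2, abs_of_nonpos h3, hF'vu y]
      linarith
  refine ⟨hu_int, hv_int, ?_⟩
  have hsubint : ∫ y in Ioi (0:ℝ), (u y - v y) = (∫ y in Ioi (0:ℝ), u y) - ∫ y in Ioi (0:ℝ), v y :=
    integral_sub hu_int hv_int
  have hzero : ∫ y in Ioi (0:ℝ), (u y - v y) = 0 := by
    rw [setIntegral_congr_fun measurableSet_Ioi (fun y _ => huv y), MeasureTheory.integral_neg, hIzero, neg_zero]
  have : (∫ y in Ioi (0:ℝ), u y) - ∫ y in Ioi (0:ℝ), v y = 0 := by rw [← hsubint, hzero]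
  linarith
end

section
/- Let h, g satisfy Assumption A1 and condition (70), with h not identically zero on [y₀,∞), and let α > 0. For θ > 0 set f(θ) := ∫_0^∞ (h(y)/g(y)) (exp(∫_{y₀}^y α/g(x) dx))^θ exp(∫_{y₀}^y (−αx+h(x))/g(x) dx) dy. Then f is continuous and strictly decreasing on (0,∞), f(θ) → −∞ as θ → ∞, and as θ → 0⁺ the limit of f(θ) exists in (−∞,+∞] and equals ∫_0^∞ (h(y)/g(y)) exp(∫_{y₀}^y (−αx+h(x))/g(x) dx) dy, this last integral being well defined in (−∞,+∞] because the negative part of its integrand is integrable. -/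
open Filter Set MeasureTheory intervalIntegral
open Topology

lemma tail_integrable {v w E : ℝ → ℝ} {M : ℝ}
    (hv : ∀ T, IntegrableOn v (Ioc M T))
    (hw : ∀ T, M ≤ T → IntervalIntegrable w volume M T)
    (hd : ∀ y ∈ Ici M, HasDerivAt E (w y) y)
    (hE0 : ∀ y ∈ Ici M, 0 ≤ E y)
    (hb : ∀ y ∈ Ici M, ‖v y‖ ≤ -(w y)) :
    IntegrableOn v (Ioi M) := by
  apply integrableOn_Ioi_of_intervalIntegral_norm_bounded (b := fun n : ℕ => M + n)
    (l := atTop) (E M) M (fun n => hv _)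
    (tendsto_atTop_add_const_left atTop M tendsto_natCast_atTop_atTop)
  filter_upwards [eventually_ge_atTop 0] with n _
  set T : ℝ := M + n with hT
  have hMT : M ≤ T := by simp [hT, Nat.cast_nonneg]
  have h1 : ∫ x in M..T, ‖v x‖ ≤ ∫ x in M..T, -(w x) := by
    apply intervalIntegral.integral_mono_on hMT
      ((intervalIntegrable_iff_integrableOn_Ioc_of_le hMT).2 (hv T).norm) ((hw T hMT).neg)
    intro x hx; exact hb x (mem_Ici.2 hx.1)
  have h2 : ∫ x in M..T, w x = E T - E M :=
    intervalIntegral.integral_eq_sub_of_hasDerivAt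
      (fun x hx => hd x (by rw [uIcc_of_le hMT] at hx; exact hx.1)) (hw T hMT)
  rw [intervalIntegral.integral_neg, h2] at h1
  have := hE0 T (mem_Ici.2 hMT)
  linarith

lemma head_integrable {v w E : ℝ → ℝ} {δ : ℝ} (hδ : 0 < δ)
    (hv : ∀ ε, 0 < ε → IntegrableOn v (Ioc ε δ))
    (hw : ∀ ε, 0 < ε → ε ≤ δ → IntervalIntegrable w volume ε δ)
    (hd : ∀ y ∈ Ioc (0:ℝ) δ, HasDerivAt E (w y) y)
    (hE0 : ∀ y ∈ Ioc (0:ℝ) δ, 0 ≤ E y)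
    (hb : ∀ y ∈ Ioc (0:ℝ) δ, ‖v y‖ ≤ w y) :
    IntegrableOn v (Ioc 0 δ) := by
  have ha : Tendsto (fun n : ℕ => δ / (n + 2)) atTop (𝓝 0) := by
    have : Tendsto (fun n : ℕ => ((n:ℝ) + 2)) atTop atTop :=
      tendsto_atTop_add_const_right atTop 2 tendsto_natCast_atTop_atTop
    simpa [div_eq_mul_inv] using this.inv_tendsto_atTop.const_mul δ
  have hmem : ∀ n : ℕ, δ / (n + 2) ∈ Ioc (0:ℝ) δ := by
    intro n
    constructor
    · positivity
    · rw [div_le_iff₀ (by positivity)]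
      nlinarith [Nat.cast_nonneg (α := ℝ) n]
  apply integrableOn_Ioc_of_intervalIntegral_norm_bounded_left
    (I := E δ) (a := fun n : ℕ => δ / (n + 2)) (l := atTop)
    (fun n => hv _ (hmem n).1) ha
  filter_upwards [] with n
  set ε : ℝ := δ / (n + 2) with hε
  have hεδ : ε ≤ δ := (hmem n).2
  have hε0 : 0 < ε := (hmem n).1
  have hIcc : Icc ε δ ⊆ Ioc 0 δ := fun x hx => ⟨lt_of_lt_of_le hε0 hx.1, hx.2⟩
  have h1 : ∫ x in Ioc ε δ, ‖v x‖ = ∫ x in ε..δ, ‖v x‖ :=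
    (intervalIntegral.integral_of_le hεδ).symm
  have h2 : ∫ x in ε..δ, ‖v x‖ ≤ ∫ x in ε..δ, w x := by
    apply intervalIntegral.integral_mono_on hεδ
      ((intervalIntegrable_iff_integrableOn_Ioc_of_le hεδ).2 (hv ε hε0).norm) (hw ε hε0 hεδ)
    intro x hx; exact hb x (hIcc hx)
  have h3 : ∫ x in ε..δ, w x = E δ - E ε :=
    intervalIntegral.integral_eq_sub_of_hasDerivAt
      (fun x hx => hd x (hIcc (by rwa [uIcc_of_le hεδ] at hx))) (hw ε hε0 hεδ)
  have := hE0 ε ⟨hε0, hεδ⟩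
  rw [h1]
  linarith

set_option maxHeartbeats 1000000 in

/-- Analytic properties (79)–(82) of the function
`f(θ) = ∫_0^∞ (h(y)/g(y)) (exp ∫_{y₀}^y α/g)^θ exp(∫_{y₀}^y (-αx+h(x))/g(x) dx) dy`:
`f` is continuous and strictly decreasing on `(0,∞)`, tends to `-∞` at `∞`, and as
`θ → 0⁺` it converges in `(-∞,+∞]` to
`∫_0^∞ (h(y)/g(y)) exp(∫_{y₀}^y (-αx+h(x))/g(x) dx) dy`, whose negative part is
integrable. -/
theorem stmt7 (h g : ℝ → ℝ)
    (hhlip : LocLipOn h (Ici 0)) (hglip : LocLipOn g (Ici 0))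
    (hh0 : h 0 = 0) (hg0 : g 0 = 0)
    (hgnn : ∀ x ∈ Ici (0:ℝ), 0 ≤ g x) (hgpos : ∀ x ∈ Ioi (0:ℝ), 0 < g x)
    (hgrow : ∃ Cg : ℝ, ∀ᶠ x in atTop, Real.sqrt (g x) / x ≤ Cg)
    (y₀ : ℝ) (hy₀ : 0 < y₀)
    (hhge : ∀ x ∈ Icc (0:ℝ) y₀, 0 ≤ h x) (hhle : ∀ x ∈ Ici y₀, h x ≤ 0)
    (hhne : ∃ y, y₀ ≤ y ∧ h y ≠ 0)
    (α : ℝ) (hα : 0 < α)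
    (ψ : ℝ → ℝ)
    (hψ : ∀ y, ψ y = h y / g y * Real.exp (∫ x in y₀..y, (-α * x + h x) / g x))
    (f : ℝ → ℝ)
    (hf : ∀ θ : ℝ, f θ =
      ∫ y in Ioi (0:ℝ), h y / g y * (Real.exp (∫ x in y₀..y, α / g x)) ^ θ *
        Real.exp (∫ x in y₀..y, (-α * x + h x) / g x)) :
    ContinuousOn f (Ioi 0) ∧
    StrictAntiOn f (Ioi 0) ∧
    Tendsto f atTop atBot ∧
    IntegrableOn (fun y => max (-ψ y) 0) (Ioi 0) ∧
    Tendsto (fun θ => ((f θ : ℝ) : EReal)) (nhdsWithin 0 (Ioi 0))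
      (nhds (ENNReal.toEReal (∫⁻ y in Ioi (0:ℝ), ENNReal.ofReal (ψ y))
        - ((∫ y in Ioi (0:ℝ), max (-ψ y) 0 : ℝ) : EReal))) := by
  classical
  -- continuity of h and g on [0,∞)
  have locLip_cont : ∀ (F : ℝ → ℝ), LocLipOn F (Ici 0) → ContinuousOn F (Ici 0) := by
    intro F hF x hx
    obtain ⟨K, t, ht, hlip⟩ := hF x hx
    have hxt : x ∈ t := by
      obtain ⟨U, hUo, hxU, hsub⟩ := mem_nhdsWithin.1 ht
      exact hsub ⟨hxU, hx⟩
    exact (hlip.continuousOn x hxt).mono_of_mem_nhdsWithin ht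
  have hch : ContinuousOn h (Ici 0) := locLip_cont h hhlip
  have hcg : ContinuousOn g (Ici 0) := locLip_cont g hglip
  have hgy : ∀ y ∈ Ioi (0:ℝ), ContinuousAt g y := fun y hy =>
    hcg.continuousAt (Ici_mem_nhds hy)
  have hhy : ∀ y ∈ Ioi (0:ℝ), ContinuousAt h y := fun y hy =>
    hch.continuousAt (Ici_mem_nhds hy)
  set A : ℝ → ℝ := fun y => ∫ x in y₀..y, α / g x with hAdef
  set φf : ℝ → ℝ := fun y => ∫ x in y₀..y, (-α * x + h x) / g x with hφdef
  set Ψ : ℝ → ℝ → ℝ := fun θ y => h y / g y * Real.exp (θ * A y + φf y) with hΨdef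
  have hc1 : ∀ y ∈ Ioi (0:ℝ), ContinuousAt (fun x => α / g x) y := fun y hy =>
    continuousAt_const.div (hgy y hy) (ne_of_gt (hgpos y hy))
  have hc2 : ∀ y ∈ Ioi (0:ℝ), ContinuousAt (fun x => (-α * x + h x) / g x) y := fun y hy =>
    (((continuousAt_const.mul continuousAt_id).add (hhy y hy)).div (hgy y hy)
      (ne_of_gt (hgpos y hy)))
  have hii : ∀ (k : ℝ → ℝ), (∀ y ∈ Ioi (0:ℝ), ContinuousAt k y) →
      ∀ a b : ℝ, 0 < a → 0 < b → IntervalIntegrable k volume a b := by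
    intro k hk a b ha hb
    apply ContinuousOn.intervalIntegrable
    intro x hx
    exact (hk x (lt_of_lt_of_le (lt_min ha hb) hx.1)).continuousWithinAt
  have hder : ∀ (k : ℝ → ℝ), (∀ z ∈ Ioi (0:ℝ), ContinuousAt k z) →
      ∀ y ∈ Ioi (0:ℝ), HasDerivAt (fun t => ∫ x in y₀..t, k x) (k y) y := by
    intro k hk y hy
    apply intervalIntegral.integral_hasDerivAt_right (hii k hk y₀ y hy₀ hy)
    · have : ContinuousOn k (Ioi 0) := fun z hz => (hk z hz).continuousWithinAt
      exact (this.stronglyMeasurableAtFilter isOpen_Ioi y hy)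
    · exact hk y hy
  have hAd : ∀ y ∈ Ioi (0:ℝ), HasDerivAt A (α / g y) y := hder _ hc1
  have hφd : ∀ y ∈ Ioi (0:ℝ), HasDerivAt φf ((-α * y + h y) / g y) y := hder _ hc2
  -- continuity of Ψ θ
  have hΨca : ∀ θ : ℝ, ∀ y ∈ Ioi (0:ℝ), ContinuousAt (Ψ θ) y := by
    intro θ y hy
    exact ((hhy y hy).div (hgy y hy) (ne_of_gt (hgpos y hy))).mul
      (Real.continuous_exp.continuousAt.comp
        (((hAd y hy).continuousAt.const_mul θ).add (hφd y hy).continuousAt))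
  have hΨc : ∀ θ : ℝ, ContinuousOn (Ψ θ) (Ioi 0) := fun θ y hy =>
    (hΨca θ y hy).continuousWithinAt
  have hmeasΨ : ∀ θ : ℝ, AEStronglyMeasurable (Ψ θ) (volume.restrict (Ioi 0)) := fun θ =>
    (hΨc θ).aestronglyMeasurable measurableSet_Ioi
  -- sign facts
  have hAle : ∀ y : ℝ, 0 < y → y ≤ y₀ → A y ≤ 0 := by
    intro y hy hyy
    have h1 : 0 ≤ ∫ x in y..y₀, α / g x :=
      intervalIntegral.integral_nonneg hyy
        (fun u hu => le_of_lt (div_pos hα (hgpos u (lt_of_lt_of_le hy hu.1))))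
    have h2 : A y = -∫ x in y..y₀, α / g x := intervalIntegral.integral_symm y y₀
    rw [h2]; linarith
  have hAge : ∀ y : ℝ, y₀ ≤ y → 0 ≤ A y := fun y hyy =>
    intervalIntegral.integral_nonneg hyy
      (fun u hu => le_of_lt (div_pos hα (hgpos u (lt_of_lt_of_le hy₀ hu.1))))
  have hApos : ∀ y : ℝ, y₀ < y → 0 < A y := by
    intro y hyy
    apply intervalIntegral.intervalIntegral_pos_of_pos_on
      (hii _ hc1 y₀ y hy₀ (lt_trans hy₀ hyy))
      (fun x hx => div_pos hα (hgpos x (lt_trans hy₀ hx.1))) hyy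
  have hΨnn : ∀ (θ : ℝ) (y : ℝ), 0 < y → y ≤ y₀ → 0 ≤ Ψ θ y := by
    intro θ y hy hyy
    exact mul_nonneg (div_nonneg (hhge y ⟨le_of_lt hy, hyy⟩) (le_of_lt (hgpos y hy)))
      (le_of_lt (Real.exp_pos _))
  have hΨnp : ∀ (θ : ℝ) (y : ℝ), y₀ ≤ y → Ψ θ y ≤ 0 := by
    intro θ y hyy
    exact mul_nonpos_of_nonpos_of_nonneg
      (div_nonpos_of_nonpos_of_nonneg (hhle y hyy) (hgnn y (le_trans (le_of_lt hy₀) hyy)))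
      (le_of_lt (Real.exp_pos _))
  have hΨanti : ∀ y ∈ Ioi (0:ℝ), ∀ θ1 θ2 : ℝ, θ1 ≤ θ2 → Ψ θ2 y ≤ Ψ θ1 y := by
    intro y hy θ1 θ2 h12
    rcases le_total y y₀ with hc | hc
    · have h1 : 0 ≤ h y / g y :=
        div_nonneg (hhge y ⟨le_of_lt hy, hc⟩) (le_of_lt (hgpos y hy))
      have h2 : θ2 * A y ≤ θ1 * A y := by nlinarith [hAle y hy hc]
      exact mul_le_mul_of_nonneg_left (Real.exp_le_exp.2 (by linarith)) h1
    · have h1 : h y / g y ≤ 0 :=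
        div_nonpos_of_nonpos_of_nonneg (hhle y hc) (le_of_lt (hgpos y hy))
      have h2 : θ1 * A y ≤ θ2 * A y := mul_le_mul_of_nonneg_right h12 (hAge y hc)
      exact mul_le_mul_of_nonpos_left (Real.exp_le_exp.2 (by linarith)) h1
  -- derivative of the exponential factor
  set E : ℝ → ℝ → ℝ := fun θ y => Real.exp (θ * A y + φf y) with hEdef
  set u : ℝ → ℝ → ℝ := fun θ y => θ * (α / g y) + (-α * y + h y) / g y with hudef
  have hEd : ∀ (θ : ℝ), ∀ y ∈ Ioi (0:ℝ),
      HasDerivAt (E θ) (u θ y * E θ y) y := by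
    intro θ y hy
    have := (((hAd y hy).const_mul θ).add (hφd y hy)).exp
    simpa [hEdef, hudef, mul_comm] using this
  have hEcont : ∀ (θ : ℝ), ∀ y ∈ Ioi (0:ℝ), ContinuousAt (fun z => u θ z * E θ z) y := by
    intro θ y hy
    exact ((( hc1 y hy).const_mul θ).add (hc2 y hy)).mul
      (Real.continuous_exp.continuousAt.comp
        (((hAd y hy).continuousAt.const_mul θ).add (hφd y hy).continuousAt))
  have hEpos : ∀ θ y, 0 < E θ y := fun θ y => Real.exp_pos _
  -- middle integrability
  have hmid : ∀ (θ : ℝ) (a b : ℝ), 0 < a → IntegrableOn (Ψ θ) (Ioc a b) := by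
    intro θ a b ha
    have hsub : Icc a (max a b) ⊆ Ioi 0 := fun x hx => lt_of_lt_of_le ha hx.1
    have : IntegrableOn (Ψ θ) (Icc a (max a b)) :=
      ContinuousOn.integrableOn_Icc ((hΨc θ).mono hsub)
    exact this.mono_set (fun x hx => ⟨le_of_lt hx.1, le_trans hx.2 (le_max_right a b)⟩)
  -- tail integrability
  have htail : ∀ θ : ℝ, 0 ≤ θ → IntegrableOn (Ψ θ) (Ioi (max y₀ θ)) := by
    intro θ hθ
    set M := max y₀ θ with hM
    have hM0 : 0 < M := lt_of_lt_of_le hy₀ (le_max_left _ _)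
    apply tail_integrable (w := fun y => u θ y * E θ y) (E := E θ)
    · intro T; exact hmid θ M T hM0
    · intro T hMT
      apply ContinuousOn.intervalIntegrable
      intro x hx
      have : 0 < x := lt_of_lt_of_le (lt_min hM0 (lt_of_lt_of_le hM0 hMT)) hx.1
      exact (hEcont θ x this).continuousWithinAt
    · intro y hy; exact hEd θ y (lt_of_lt_of_le hM0 hy)
    · intro y _; exact le_of_lt (hEpos θ y)
    · intro y hy
      have hy0 : 0 < y := lt_of_lt_of_le hM0 hy
      have hyy₀ : y₀ ≤ y := le_trans (le_max_left _ _) hy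
      have hθy : θ ≤ y := le_trans (le_max_right _ _) hy
      have hgy0 : 0 < g y := hgpos y hy0
      have hΨval : ‖Ψ θ y‖ = -(h y / g y) * E θ y := by
        rw [Real.norm_eq_abs, abs_of_nonpos (hΨnp θ y hyy₀), hΨdef]
        ring
      rw [hΨval]
      have hle : u θ y ≤ h y / g y := by
        rw [hudef]
        simp only [add_div]
        have h1 : θ * (α / g y) + -α * y / g y ≤ 0 := by
          have e : θ * (α / g y) + -α * y / g y = (θ * α + -α * y) / g y := by ring
          rw [e]
          exact div_nonpos_of_nonpos_of_nonneg (by nlinarith) (le_of_lt hgy0)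
        linarith
      have := mul_le_mul_of_nonneg_right (neg_le_neg hle) (le_of_lt (hEpos θ y))
      calc -(h y / g y) * E θ y ≤ -u θ y * E θ y := this
      _ = -(u θ y * E θ y) := by ring
  -- head integrability near 0
  have hhead : ∀ θ : ℝ, 0 < θ → ∃ δ : ℝ, 0 < δ ∧ δ ≤ y₀ ∧ IntegrableOn (Ψ θ) (Ioc 0 δ) := by
    intro θ hθ
    obtain ⟨K, t, ht, hlip⟩ := hhlip 0 self_mem_Ici
    obtain ⟨U, hUo, hU0, hUsub⟩ := mem_nhdsWithin.1 ht
    obtain ⟨ε, hε, hball⟩ := Metric.isOpen_iff.1 hUo 0 hU0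
    set δ : ℝ := min (ε/2) (min y₀ (θ/2)) with hδdef
    have hδ0 : 0 < δ := lt_min (by linarith) (lt_min hy₀ (by linarith))
    have hδy₀ : δ ≤ y₀ := le_trans (min_le_right _ _) (min_le_left _ _)
    have hδθ : δ ≤ θ/2 := le_trans (min_le_right _ _) (min_le_right _ _)
    have hsubt : Icc 0 δ ⊆ t := by
      intro x hx
      apply hUsub
      refine ⟨hball ?_, hx.1⟩
      rw [Metric.mem_ball, Real.dist_eq, sub_zero, abs_of_nonneg hx.1]
      have := hx.2
      have h2 : δ ≤ ε/2 := min_le_left _ _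
      linarith
    have hKb : ∀ x ∈ Icc (0:ℝ) δ, h x ≤ K * x := by
      intro x hx
      have h0t : (0:ℝ) ∈ t := hsubt ⟨le_refl 0, le_of_lt hδ0⟩
      have hd := hlip.dist_le_mul x (hsubt hx) 0 h0t
      rw [Real.dist_eq, Real.dist_eq, hh0, sub_zero, sub_zero] at hd
      calc h x ≤ |h x| := le_abs_self _
      _ ≤ K * |x| := hd
      _ = K * x := by rw [abs_of_nonneg hx.1]
    set C : ℝ := K * δ * (2 / (θ * α)) with hCdef
    have hC0 : 0 ≤ C := by positivity
    refine ⟨δ, hδ0, hδy₀, ?_⟩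
    apply head_integrable (w := fun y => C * (u θ y * E θ y)) (E := fun y => C * E θ y) hδ0
    · intro ε' hε'; exact hmid θ ε' δ hε'
    · intro ε' hε' _
      apply ContinuousOn.intervalIntegrable
      intro x hx
      have hx0 : 0 < x := lt_of_lt_of_le (lt_min hε' hδ0) hx.1
      exact (continuousAt_const.mul (hEcont θ x hx0)).continuousWithinAt
    · intro y hy; exact (hEd θ y hy.1).const_mul C
    · intro y _; exact mul_nonneg hC0 (le_of_lt (hEpos θ y))
    · intro y hy
      have hy0 : 0 < y := hy.1
      have hgy0 : 0 < g y := hgpos y hy0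
      have hyy₀ : y ≤ y₀ := le_trans hy.2 hδy₀
      rw [Real.norm_eq_abs, abs_of_nonneg (hΨnn θ y hy0 hyy₀)]
      have hKδ : h y ≤ K * δ :=
        le_trans (hKb y ⟨le_of_lt hy0, hy.2⟩) (mul_le_mul_of_nonneg_left hy.2 K.coe_nonneg)
      have step1 : h y / g y ≤ (K * δ) / g y := by gcongr
      have step2 : (θ * α / 2) / g y ≤ u θ y := by
        have e : u θ y - (θ * α / 2) / g y = (θ * α / 2 + -α * y + h y) / g y := by
          rw [hudef]; ring
        have hnum : 0 ≤ θ * α / 2 + -α * y + h y := by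
          have hhy' : 0 ≤ h y := hhge y ⟨le_of_lt hy0, hyy₀⟩
          nlinarith [hy.2]
        nlinarith [div_nonneg hnum (le_of_lt hgy0)]
      have key : h y / g y ≤ C * u θ y := by
        have hθα : θ * α ≠ 0 := by positivity
        have e2 : C * ((θ * α / 2) / g y) = (K * δ) / g y := by
          rw [hCdef]; field_simp
        calc h y / g y ≤ (K * δ) / g y := step1
        _ = C * ((θ * α / 2) / g y) := e2.symm
        _ ≤ C * u θ y := mul_le_mul_of_nonneg_left step2 hC0
      calc Ψ θ y = (h y / g y) * E θ y := by rw [hΨdef, hEdef]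
      _ ≤ (C * u θ y) * E θ y := mul_le_mul_of_nonneg_right key (le_of_lt (hEpos θ y))
      _ = C * (u θ y * E θ y) := by ring
  -- global integrability
  have hInt : ∀ θ : ℝ, 0 < θ → IntegrableOn (Ψ θ) (Ioi 0) := by
    intro θ hθ
    obtain ⟨δ, hδ0, hδy₀, hδint⟩ := hhead θ hθ
    set M := max y₀ θ with hM
    have hδM : δ ≤ M := le_trans hδy₀ (le_max_left _ _)
    have h1 : IntegrableOn (Ψ θ) (Ioc 0 M) := by
      have := hδint.union (hmid θ δ M hδ0)
      rwa [Ioc_union_Ioc_eq_Ioc (le_of_lt hδ0) hδM] at this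
    have h2 := h1.union (htail θ (le_of_lt hθ))
    rwa [Ioc_union_Ioi_eq_Ioi (le_of_lt (lt_of_lt_of_le hy₀ (le_max_left _ _)))] at h2
  -- ψ is Ψ 0
  have hψ0 : ψ = Ψ 0 := by
    funext y
    rw [hψ y]
    simp [hΨdef, hφdef]
  -- f θ is the integral of Ψ θ
  have hfΨ : ∀ θ : ℝ, f θ = ∫ y in Ioi (0:ℝ), Ψ θ y := by
    intro θ
    rw [hf θ]
    congr 1
    funext y
    simp only [hΨdef, hAdef, hφdef]
    rw [Real.rpow_def_of_pos (Real.exp_pos _), Real.log_exp, mul_assoc, ← Real.exp_add,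
      mul_comm (∫ x in y₀..y, α / g x) θ]
  -- integrability of the negative part at θ = 0
  have htail0 : IntegrableOn (Ψ 0) (Ioi y₀) := by
    have := htail 0 (le_refl 0)
    rwa [max_eq_left (le_of_lt hy₀)] at this
  have hNegInt : IntegrableOn (fun y => max (-Ψ 0 y) 0) (Ioi 0) := by
    have h1 : IntegrableOn (fun y => max (-Ψ 0 y) 0) (Ioi y₀) := by
      apply IntegrableOn.congr_fun (f := fun y => -Ψ 0 y) htail0.neg ?_ measurableSet_Ioi
      intro y hy
      exact (max_eq_left (neg_nonneg.2 (hΨnp 0 y (le_of_lt hy)))).symm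
    have h2 : IntegrableOn (fun y => max (-Ψ 0 y) 0) (Ioc 0 y₀) := by
      apply (integrableOn_zero (μ := volume)).congr_fun ?_ measurableSet_Ioc
      intro y hy
      exact (max_eq_right (neg_nonpos.2 (hΨnn 0 y hy.1 hy.2))).symm
    have h3 := h2.union h1
    rwa [Ioc_union_Ioi_eq_Ioi (le_of_lt hy₀)] at h3
  have hfeq : f = fun θ => ∫ y in Ioi (0:ℝ), Ψ θ y := funext hfΨ
  -- the interval [c,d] where h is strictly negative
  have hy₀0 : h y₀ = 0 :=
    le_antisymm (hhle y₀ self_mem_Ici) (hhge y₀ ⟨hy₀.le, le_refl _⟩)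
  obtain ⟨c, d, hy₀c, hcd, hneg⟩ :
      ∃ c d : ℝ, y₀ < c ∧ c < d ∧ ∀ y ∈ Icc c d, h y < 0 := by
    obtain ⟨y₁, hy₁, hy₁ne⟩ := hhne
    have hy₁neg : h y₁ < 0 := lt_of_le_of_ne (hhle y₁ hy₁) hy₁ne
    have hy₁gt : y₀ < y₁ := by
      rcases lt_or_eq_of_le hy₁ with h' | h'
      · exact h'
      · exact absurd (h' ▸ hy₀0) hy₁ne
    have hy₁0 : (0:ℝ) < y₁ := lt_trans hy₀ hy₁gt
    have hev : ∀ᶠ x in 𝓝 y₁, h x < 0 :=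
      (hhy y₁ hy₁0).eventually_lt continuousAt_const hy₁neg
    obtain ⟨ε, hε0, hball⟩ := Metric.eventually_nhds_iff.1 hev
    set ε' : ℝ := min (ε/2) ((y₁ - y₀)/2) with hε'def
    have hε'0 : 0 < ε' := lt_min (by linarith) (by linarith)
    refine ⟨y₁ - ε', y₁ + ε', ?_, by linarith, ?_⟩
    · have : ε' ≤ (y₁ - y₀)/2 := min_le_right _ _
      linarith
    · intro y hy
      apply hball
      rw [Real.dist_eq, abs_lt]
      have h1 : ε' ≤ ε/2 := min_le_left _ _
      constructor <;> [linarith [hy.1]; linarith [hy.2]]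
  have hIccIoi : Icc c d ⊆ Ioi (0:ℝ) := fun x hx => lt_of_lt_of_le (lt_trans hy₀ hy₀c) hx.1
  have hfactor : ∀ θ y : ℝ, Ψ θ y = Ψ 0 y * Real.exp (θ * A y) := by
    intro θ y
    simp only [hΨdef]
    rw [mul_assoc, ← Real.exp_add]
    congr 1
    ring
  -- Part 1 : continuity
  have part1 : ContinuousOn f (Ioi 0) := by
    rw [hfeq]
    intro θ₀ hθ₀
    apply ContinuousAt.continuousWithinAt
    have hhalf : (0:ℝ) < θ₀/2 := by simpa using half_pos (show (0:ℝ) < θ₀ from hθ₀)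
    apply continuousAt_of_dominated (bound := fun y => ‖Ψ (θ₀/2) y‖ + ‖Ψ (2*θ₀) y‖)
    · filter_upwards [] with θ; exact hmeasΨ θ
    · filter_upwards [Icc_mem_nhds (by linarith : θ₀/2 < θ₀) (by linarith : θ₀ < 2*θ₀)]
        with θ hθ
      apply (ae_restrict_iff' measurableSet_Ioi).2
      filter_upwards [] with y hy
      rcases le_total y y₀ with hc' | hc'
      · have h1 : Ψ θ y ≤ Ψ (θ₀/2) y := hΨanti y hy _ _ hθ.1
        rw [Real.norm_eq_abs, abs_of_nonneg (hΨnn θ y hy hc')]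
        have h2 : Ψ (θ₀/2) y ≤ ‖Ψ (θ₀/2) y‖ := le_abs_self _
        have := norm_nonneg (Ψ (2*θ₀) y)
        linarith
      · have h1 : Ψ (2*θ₀) y ≤ Ψ θ y := hΨanti y hy _ _ hθ.2
        rw [Real.norm_eq_abs, abs_of_nonpos (hΨnp θ y hc')]
        have h2 : -Ψ (2*θ₀) y ≤ ‖Ψ (2*θ₀) y‖ := neg_le_abs _
        have := norm_nonneg (Ψ (θ₀/2) y)
        linarith
    · exact (hInt (θ₀/2) hhalf).norm.add (hInt (2*θ₀) (by linarith)).norm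
    · apply (ae_restrict_iff' measurableSet_Ioi).2
      filter_upwards [] with y _
      exact continuousAt_const.mul (Real.continuous_exp.continuousAt.comp
        ((continuousAt_id.mul continuousAt_const).add continuousAt_const))
  -- Part 2 : strict antitonicity
  have part2 : StrictAntiOn f (Ioi 0) := by
    intro θ1 h1 θ2 h2 h12
    rw [hfeq]
    simp only
    have hint1 := hInt θ1 h1
    have hint2 := hInt θ2 h2
    have hdiff : (∫ y in Ioi (0:ℝ), Ψ θ1 y) - (∫ y in Ioi (0:ℝ), Ψ θ2 y)
        = ∫ y in Ioi (0:ℝ), (Ψ θ1 y - Ψ θ2 y) := (integral_sub hint1 hint2).symm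
    have hnn : ∀ y ∈ Ioi (0:ℝ), 0 ≤ Ψ θ1 y - Ψ θ2 y := fun y hy =>
      sub_nonneg.2 (hΨanti y hy _ _ h12.le)
    have hstep : (∫ y in Icc c d, (Ψ θ1 y - Ψ θ2 y)) ≤ ∫ y in Ioi (0:ℝ), (Ψ θ1 y - Ψ θ2 y) := by
      apply setIntegral_mono_set (hint1.sub hint2)
        ((ae_restrict_iff' measurableSet_Ioi).2 (ae_of_all _ hnn))
        (HasSubset.Subset.eventuallyLE hIccIoi)
    have hpos : 0 < ∫ y in Icc c d, (Ψ θ1 y - Ψ θ2 y) := by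
      rw [integral_Icc_eq_integral_Ioc, ← intervalIntegral.integral_of_le hcd.le]
      apply intervalIntegral.intervalIntegral_pos_of_pos_on
      · apply ContinuousOn.intervalIntegrable
        intro x hx
        rw [uIcc_of_le hcd.le] at hx
        exact (((hΨca θ1 x (hIccIoi hx)).sub (hΨca θ2 x (hIccIoi hx)))).continuousWithinAt
      · intro x hx
        have hx0 : (0:ℝ) < x := hIccIoi ⟨hx.1.le, hx.2.le⟩
        have hxy₀ : y₀ < x := lt_trans hy₀c hx.1
        have hAx := hApos x hxy₀
        have hhx : h x < 0 := hneg x ⟨hx.1.le, hx.2.le⟩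
        have hgx := hgpos x hx0
        have hexp : Real.exp (θ1 * A x + φf x) < Real.exp (θ2 * A x + φf x) := by
          apply Real.exp_lt_exp.2
          nlinarith
        have hq : h x / g x < 0 := div_neg_of_neg_of_pos hhx hgx
        have : Ψ θ1 x - Ψ θ2 x
            = (h x / g x) * (Real.exp (θ1 * A x + φf x) - Real.exp (θ2 * A x + φf x)) := by
          simp only [hΨdef]; ring
        rw [this]
        exact mul_pos_of_neg_of_neg hq (by linarith)
      · exact hcd
    linarith [hdiff, hstep, hpos]
  -- Part 3 : tendsto atBot
  have part3 : Tendsto f atTop atBot := by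
    obtain ⟨ym, hym, hmax⟩ := (isCompact_Icc (a := c) (b := d)).exists_isMaxOn
      (nonempty_Icc.2 hcd.le) ((hΨc 0).mono hIccIoi)
    obtain ⟨ya, hya, hmin⟩ := (isCompact_Icc (a := c) (b := d)).exists_isMinOn
      (nonempty_Icc.2 hcd.le) (fun x hx => (hAd x (hIccIoi hx)).continuousAt.continuousWithinAt)
    set ε' : ℝ := -Ψ 0 ym with hε'def
    have hε'0 : 0 < ε' := by
      rw [hε'def, neg_pos]
      exact mul_neg_of_neg_of_pos
        (div_neg_of_neg_of_pos (hneg ym hym) (hgpos ym (hIccIoi hym))) (Real.exp_pos _)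
    set a : ℝ := A ya with hadef
    have ha0 : 0 < a := hApos ya (lt_of_lt_of_le hy₀c hya.1)
    have key : ∀ θ : ℝ, 1 ≤ θ →
        f θ ≤ (∫ y in Ioc (0:ℝ) y₀, Ψ 1 y) - ((d - c) * ε') * Real.exp (θ * a) := by
      intro θ hθ1
      have hθ0 : (0:ℝ) < θ := lt_of_lt_of_le one_pos hθ1
      have hIy₀ : IntegrableOn (Ψ θ) (Ioi y₀) := (hInt θ hθ0).mono_set (Ioi_subset_Ioi hy₀.le)
      have hIcc : IntegrableOn (Ψ θ) (Icc c d) := (hInt θ hθ0).mono_set hIccIoi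
      have hsplit : f θ = (∫ y in Ioc (0:ℝ) y₀, Ψ θ y) + ∫ y in Ioi y₀, Ψ θ y := by
        rw [hfΨ θ, ← Ioc_union_Ioi_eq_Ioi hy₀.le,
          setIntegral_union (Ioc_disjoint_Ioi le_rfl) measurableSet_Ioi
            ((hInt θ hθ0).mono_set (fun x hx => hx.1)) hIy₀]
      have b1 : (∫ y in Ioc (0:ℝ) y₀, Ψ θ y) ≤ ∫ y in Ioc (0:ℝ) y₀, Ψ 1 y := by
        apply setIntegral_mono_on ((hInt θ hθ0).mono_set (fun x hx => hx.1))
          ((hInt 1 one_pos).mono_set (fun x hx => hx.1)) measurableSet_Ioc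
        intro y hy
        exact hΨanti y hy.1 1 θ hθ1
      have b2 : (∫ y in Ioi y₀, Ψ θ y) ≤ ∫ y in Icc c d, Ψ θ y := by
        have hIccsub : Icc c d ⊆ Ioi y₀ := fun x hx => lt_of_lt_of_le hy₀c hx.1
        have hmono : (∫ y in Icc c d, -Ψ θ y) ≤ ∫ y in Ioi y₀, -Ψ θ y := by
          apply setIntegral_mono_set hIy₀.neg
            ((ae_restrict_iff' measurableSet_Ioi).2
              (ae_of_all _ fun y hy => neg_nonneg.2 (hΨnp θ y (le_of_lt hy))))
            (HasSubset.Subset.eventuallyLE hIccsub)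
        rw [MeasureTheory.integral_neg, MeasureTheory.integral_neg] at hmono
        linarith
      have b3 : (∫ y in Icc c d, Ψ θ y) ≤ -((d - c) * ε' * Real.exp (θ * a)) := by
        have hconst : (∫ y in Icc c d, (-ε' * Real.exp (θ * a)))
            = (d - c) * (-ε' * Real.exp (θ * a)) := by
          rw [setIntegral_const, Real.volume_real_Icc_of_le hcd.le, smul_eq_mul]
        have hmono : (∫ y in Icc c d, Ψ θ y) ≤ ∫ y in Icc c d, (-ε' * Real.exp (θ * a)) := by
          apply setIntegral_mono_on hIcc (integrableOn_const ?_) measurableSet_Icc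
          · intro y hy
            have hAy : a ≤ A y := hmin hy
            have hΨ0y : Ψ 0 y ≤ -ε' := by rw [hε'def]; simpa using hmax hy
            have he : Real.exp (θ * a) ≤ Real.exp (θ * A y) :=
              Real.exp_le_exp.2 (by nlinarith)
            calc Ψ θ y = Ψ 0 y * Real.exp (θ * A y) := hfactor θ y
            _ ≤ -ε' * Real.exp (θ * A y) :=
              mul_le_mul_of_nonneg_right hΨ0y (le_of_lt (Real.exp_pos _))
            _ ≤ -ε' * Real.exp (θ * a) := by nlinarith [Real.exp_pos (θ * a)]
          · rw [Real.volume_Icc]; exact ENNReal.ofReal_ne_top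
        rw [hconst] at hmono
        linarith
      rw [hsplit]
      have := le_trans b2 b3
      linarith [b1]
    have hblim : Tendsto (fun θ : ℝ =>
        (∫ y in Ioc (0:ℝ) y₀, Ψ 1 y) - ((d - c) * ε') * Real.exp (θ * a)) atTop atBot := by
      have h1 : Tendsto (fun θ : ℝ => θ * a) atTop atTop :=
        Tendsto.atTop_mul_const ha0 tendsto_id
      have h2 : Tendsto (fun θ : ℝ => Real.exp (θ * a)) atTop atTop :=
        Real.tendsto_exp_atTop.comp h1
      have h3 : Tendsto (fun θ : ℝ => ((d - c) * ε') * Real.exp (θ * a)) atTop atTop :=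
        h2.const_mul_atTop (mul_pos (by linarith : (0:ℝ) < d - c) hε'0)
      have h4 : Tendsto (fun θ : ℝ => -(((d - c) * ε') * Real.exp (θ * a))) atTop atBot :=
        tendsto_neg_atTop_atBot.comp h3
      have h5 := tendsto_atBot_add_const_left atTop (∫ y in Ioc (0:ℝ) y₀, Ψ 1 y) h4
      exact h5.congr (fun x => by ring)
    apply tendsto_atBot_mono' atTop ?_ hblim
    filter_upwards [eventually_ge_atTop 1] with θ hθ
    exact key θ hθ
  -- continuity in θ
  have hcθ : ∀ y : ℝ, Continuous (fun θ => Ψ θ y) := by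
    intro y
    simp only [hΨdef]
    exact continuous_const.mul (Real.continuous_exp.comp
      ((continuous_id.mul continuous_const).add continuous_const))
  -- Part 5 machinery
  have hmeasΨ' : ∀ θ : ℝ, AEMeasurable (fun y => ENNReal.ofReal (Ψ θ y))
      (volume.restrict (Ioi 0)) :=
    fun θ => ENNReal.measurable_ofReal.comp_aemeasurable (hmeasΨ θ).aemeasurable
  set Pl : ℝ → ENNReal := fun θ => ∫⁻ y in Ioi (0:ℝ), ENNReal.ofReal (Ψ θ y) with hPldef
  have hPlanti : ∀ θ1 θ2 : ℝ, θ1 ≤ θ2 → Pl θ2 ≤ Pl θ1 := by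
    intro θ1 θ2 h12
    apply lintegral_mono_ae
    apply (ae_restrict_iff' measurableSet_Ioi).2
    exact ae_of_all _ fun y hy => ENNReal.ofReal_le_ofReal (hΨanti y hy _ _ h12)
  set θseq : ℕ → ℝ := fun n => ((n:ℝ) + 1)⁻¹ with hθseqdef
  have hθseqpos : ∀ n, 0 < θseq n := fun n => by positivity
  have hθseqanti : ∀ n m : ℕ, n ≤ m → θseq m ≤ θseq n := by
    intro n m hnm
    apply inv_anti₀ (by positivity)
    have : (n:ℝ) ≤ m := Nat.cast_le.2 hnm
    linarith
  have hθseqlim : Tendsto θseq atTop (𝓝 0) := by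
    have : Tendsto (fun n : ℕ => 1 / ((n:ℝ) + 1)) atTop (𝓝 0) := tendsto_one_div_add_atTop_nhds_zero_nat
    simpa [hθseqdef, one_div] using this
  have hsup : Pl 0 = ⨆ n, Pl (θseq n) := by
    have hmono : ∀ᵐ y ∂(volume.restrict (Ioi (0:ℝ))),
        Monotone fun n => ENNReal.ofReal (Ψ (θseq n) y) := by
      apply (ae_restrict_iff' measurableSet_Ioi).2
      apply ae_of_all
      intro y hy n m hnm
      exact ENNReal.ofReal_le_ofReal (hΨanti y hy _ _ (hθseqanti n m hnm))
    have hkey := lintegral_iSup' (fun n => hmeasΨ' (θseq n)) hmono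
    have hptw : ∀ y ∈ Ioi (0:ℝ),
        (⨆ n, ENNReal.ofReal (Ψ (θseq n) y)) = ENNReal.ofReal (Ψ 0 y) := by
      intro y hy
      have hmono' : Monotone fun n => ENNReal.ofReal (Ψ (θseq n) y) :=
        fun n m hnm => ENNReal.ofReal_le_ofReal (hΨanti y hy _ _ (hθseqanti n m hnm))
      have hlim : Tendsto (fun n => ENNReal.ofReal (Ψ (θseq n) y)) atTop
          (𝓝 (ENNReal.ofReal (Ψ 0 y))) := by
        apply (ENNReal.continuous_ofReal.tendsto _).comp
        exact ((hcθ y).continuousAt.tendsto).comp hθseqlim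
      exact tendsto_nhds_unique (tendsto_atTop_iSup hmono') hlim
    calc Pl 0 = ∫⁻ y in Ioi (0:ℝ), ⨆ n, ENNReal.ofReal (Ψ (θseq n) y) :=
      (setLIntegral_congr_fun measurableSet_Ioi (fun y hy => (hptw y hy).symm))
    _ = ⨆ n, Pl (θseq n) := hkey
  have hPltop : Tendsto Pl (𝓝[>] (0:ℝ)) (𝓝 (Pl 0)) := by
    apply tendsto_order.2
    constructor
    · intro b hb
      rw [hsup] at hb
      obtain ⟨n, hn⟩ := lt_iSup_iff.1 hb
      filter_upwards [Ioo_mem_nhdsGT_of_mem ⟨le_refl (0:ℝ), hθseqpos n⟩] with θ hθ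
      exact lt_of_lt_of_le hn (hPlanti θ (θseq n) hθ.2.le)
    · intro b hb
      filter_upwards [self_mem_nhdsWithin] with θ hθ
      exact lt_of_le_of_lt (hPlanti 0 θ (le_of_lt hθ)) hb
  set N : ℝ → ℝ := fun θ => ∫ y in Ioi (0:ℝ), max (-Ψ θ y) 0 with hNdef
  have hmeasN : ∀ θ : ℝ, AEStronglyMeasurable (fun y => max (-Ψ θ y) 0)
      (volume.restrict (Ioi 0)) :=
    fun θ => by
      have : Continuous (fun p : ℝ => max (-p) 0) := (continuous_neg.max continuous_const)
      exact this.comp_aestronglyMeasurable (hmeasΨ θ)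
  have hN1int : IntegrableOn (fun y => max (-Ψ 1 y) 0) (Ioi 0) := by
    apply Integrable.mono' (hInt 1 one_pos).norm (hmeasN 1)
    apply ae_of_all
    intro y
    rw [Real.norm_eq_abs, abs_of_nonneg (le_max_right _ _)]
    exact max_le (neg_le_abs _) (abs_nonneg _)
  have hNtendsto : Tendsto N (𝓝[>] (0:ℝ)) (𝓝 (N 0)) := by
    apply MeasureTheory.tendsto_integral_filter_of_dominated_convergence
      (bound := fun y => max (-Ψ 1 y) 0)
    · filter_upwards [self_mem_nhdsWithin] with θ _; exact hmeasN θ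
    · filter_upwards [Ioc_mem_nhdsGT_of_mem ⟨le_refl (0:ℝ), one_pos⟩] with θ hθ
      apply (ae_restrict_iff' measurableSet_Ioi).2
      apply ae_of_all
      intro y hy
      rw [Real.norm_eq_abs, abs_of_nonneg (le_max_right _ _)]
      exact max_le_max (neg_le_neg (hΨanti y hy θ 1 hθ.2)) le_rfl
    · exact hN1int
    · apply (ae_restrict_iff' measurableSet_Ioi).2
      apply ae_of_all
      intro y _
      have hc : ContinuousAt (fun θ => max (-Ψ θ y) 0) 0 :=
        ((hcθ y).neg.max continuous_const).continuousAt
      exact hc.tendsto.mono_left nhdsWithin_le_nhds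
  have hPlfin : ∀ θ : ℝ, 0 < θ → Pl θ ≠ ⊤ := by
    intro θ hθ
    apply ne_of_lt
    calc Pl θ ≤ ∫⁻ y in Ioi (0:ℝ), (‖Ψ θ y‖₊ : ENNReal) :=
          lintegral_mono fun y => Real.ofReal_le_enorm (Ψ θ y)
    _ < ⊤ := (hInt θ hθ).2
  have hdecomp : ∀ θ : ℝ, 0 < θ → f θ = (Pl θ).toReal - N θ := by
    intro θ hθ
    have hofr : ∀ y : ℝ, ENNReal.ofReal (max (-Ψ θ y) 0) = ENNReal.ofReal (-Ψ θ y) := by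
      intro y
      rcases le_total (-Ψ θ y) 0 with h' | h'
      · rw [max_eq_right h', ENNReal.ofReal_of_nonpos h', ENNReal.ofReal_zero]
      · rw [max_eq_left h']
    have hNeq : N θ = (∫⁻ a in Ioi (0:ℝ), ENNReal.ofReal (-Ψ θ a)).toReal := by
      have h0 := integral_eq_lintegral_of_nonneg_ae (μ := volume.restrict (Ioi (0:ℝ)))
        (f := fun y => max (-Ψ θ y) 0) (ae_of_all _ fun y => le_max_right _ _) (hmeasN θ)
      calc N θ = (∫⁻ a in Ioi (0:ℝ), ENNReal.ofReal (max (-Ψ θ a) 0)).toReal := h0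
      _ = (∫⁻ a in Ioi (0:ℝ), ENNReal.ofReal (-Ψ θ a)).toReal := by
        rw [lintegral_congr fun y => hofr y]
    rw [hfΨ θ, integral_eq_lintegral_pos_part_sub_lintegral_neg_part (hInt θ hθ), hNeq]
  -- assemble
  refine ⟨part1, part2, part3, ?_, ?_⟩
  · rw [hψ0]; exact hNegInt
  · rw [hψ0]
    show Tendsto (fun θ => ((f θ : ℝ) : EReal)) (𝓝[>] (0:ℝ))
      (𝓝 ((Pl 0 : EReal) - ((N 0 : ℝ) : EReal)))
    have hPE : Tendsto (fun θ => ((Pl θ : ENNReal) : EReal)) (𝓝[>] (0:ℝ))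
        (𝓝 ((Pl 0 : ENNReal) : EReal)) :=
      (continuous_coe_ennreal_ereal.tendsto _).comp hPltop
    have hNE : Tendsto (fun θ => ((-(N θ) : ℝ) : EReal)) (𝓝[>] (0:ℝ))
        (𝓝 ((-(N 0) : ℝ) : EReal)) :=
      (continuous_coe_real_ereal.tendsto _).comp hNtendsto.neg
    have hadd : Tendsto (fun θ => ((Pl θ : ENNReal) : EReal) + ((-(N θ) : ℝ) : EReal))
        (𝓝[>] (0:ℝ)) (𝓝 (((Pl 0 : ENNReal) : EReal) + ((-(N 0) : ℝ) : EReal))) := by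
      have hc : ContinuousAt (fun p : EReal × EReal => p.1 + p.2)
          (((Pl 0 : ENNReal) : EReal), ((-(N 0) : ℝ) : EReal)) :=
        EReal.continuousAt_add (Or.inr (EReal.coe_ne_bot _))
          (Or.inl (EReal.coe_ennreal_ne_bot _))
      exact hc.tendsto.comp (hPE.prodMk_nhds hNE)
    have hlimeq : ((Pl 0 : ENNReal) : EReal) + ((-(N 0) : ℝ) : EReal)
        = (Pl 0 : EReal) - ((N 0 : ℝ) : EReal) := by
      rw [EReal.coe_neg, sub_eq_add_neg]
    rw [← hlimeq]
    apply hadd.congr'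
    filter_upwards [self_mem_nhdsWithin] with θ hθ
    rw [hdecomp θ hθ]
    have h1 : ((Pl θ : ENNReal) : EReal) ≠ ⊤ :=
      fun hc => hPlfin θ hθ (EReal.coe_ennreal_eq_top_iff.1 hc)
    have h2 : ((Pl θ : ENNReal) : EReal) ≠ ⊥ := EReal.coe_ennreal_ne_bot _
    have h3 : (((Pl θ).toReal : ℝ) : EReal) = ((Pl θ : ENNReal) : EReal) := by
      obtain ⟨r, hr, _⟩ := ENNReal.lt_iff_exists_coe.1 (lt_top_iff_ne_top.2 (hPlfin θ hθ))
      rw [hr]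
      simp [EReal.coe_nnreal_eq_coe_real]
    rw [show ((Pl θ).toReal - N θ : ℝ) = (Pl θ).toReal + (-(N θ)) from by ring,
      EReal.coe_add, h3]
end

section
/- Let h, g satisfy Assumption A1 and condition (70), with h not identically zero on [y₀,∞), and let α > 0. Define Φ_θ(y) := (1/g(y)) exp( ∫_{y₀}^y (α(θ−x)+h(x))/g(x) dx ) for θ, y > 0. Then there exists θ > 0 with ∫_0^∞ (y−θ) Φ_θ(y) dy = 0 if and only if ∫_0^∞ (h(y)/g(y)) exp(∫_{y₀}^y (−αx+h(x))/g(x) dx) dy > 0 (where this integral is well defined in (−∞,+∞] and the condition includes the case where it equals +∞); moreover, when such θ exists, it is unique. -/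
open Filter Set MeasureTheory intervalIntegral

open Topology

set_option maxHeartbeats 1000000

namespace S8

structure A (h g : ℝ → ℝ) (y₀ α : ℝ) : Prop where
  hc : ContinuousOn h (Ici 0)
  gc : ContinuousOn g (Ici 0)
  gpos : ∀ x : ℝ, 0 < x → 0 < g x
  y₀pos : 0 < y₀
  hge : ∀ x : ℝ, 0 ≤ x → x ≤ y₀ → 0 ≤ h x
  hle : ∀ x : ℝ, y₀ ≤ x → h x ≤ 0
  αpos : 0 < α
  glin : ∃ K, 0 < K ∧ ∃ δ, 0 < δ ∧ ∀ x, 0 ≤ x → x ≤ δ → g x ≤ K * x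
  ggrow : ∃ C, 0 < C ∧ ∃ M, y₀ < M ∧ ∀ x, M ≤ x → g x ≤ C * x ^ 2
  hneg : ∃ y, y₀ < y ∧ h y < 0

noncomputable def q (h g : ℝ → ℝ) (α θ x : ℝ) : ℝ := (α * (θ - x) + h x) / g x
noncomputable def E (h g : ℝ → ℝ) (α y₀ θ y : ℝ) : ℝ := ∫ x in y₀..y, q h g α θ x
noncomputable def W (h g : ℝ → ℝ) (α y₀ θ y : ℝ) : ℝ := Real.exp (E h g α y₀ θ y)
noncomputable def P (h g : ℝ → ℝ) (α y₀ θ y : ℝ) : ℝ := h y / g y * W h g α y₀ θ y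
noncomputable def D (h g : ℝ → ℝ) (α y₀ θ y : ℝ) : ℝ := q h g α θ y * W h g α y₀ θ y
noncomputable def F (h g : ℝ → ℝ) (α y₀ θ : ℝ) : ℝ := ∫ y in Ioi (0:ℝ), P h g α y₀ θ y
noncomputable def G (g : ℝ → ℝ) (y₀ y : ℝ) : ℝ := ∫ x in y₀..y, 1 / g x

variable {h g : ℝ → ℝ} {y₀ α : ℝ}


lemma A.gne (HA : A h g y₀ α) {x : ℝ} (hx : 0 < x) : g x ≠ 0 := (HA.gpos x hx).ne'

lemma A.hcont' (HA : A h g y₀ α) {x : ℝ} (hx : 0 < x) : ContinuousAt h x :=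
  HA.hc.continuousAt (mem_nhds_iff.2 ⟨Ioi 0, fun y (hy : y ∈ Ioi 0) => mem_Ici.2 (mem_Ioi.1 hy).le, isOpen_Ioi, hx⟩)

lemma A.gcont' (HA : A h g y₀ α) {x : ℝ} (hx : 0 < x) : ContinuousAt g x :=
  HA.gc.continuousAt (mem_nhds_iff.2 ⟨Ioi 0, fun y (hy : y ∈ Ioi 0) => mem_Ici.2 (mem_Ioi.1 hy).le, isOpen_Ioi, hx⟩)

lemma A.qcont (HA : A h g y₀ α) (θ : ℝ) : ContinuousOn (q h g α θ) (Ioi 0) := by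
  apply ContinuousOn.div
  · exact (continuous_const.mul (continuous_const.sub continuous_id)).continuousOn.add
      (HA.hc.mono fun x (hx : x ∈ Ioi 0) => mem_Ici.2 (mem_Ioi.1 hx).le)
  · exact HA.gc.mono fun x (hx : x ∈ Ioi 0) => mem_Ici.2 (mem_Ioi.1 hx).le
  · exact fun x hx => HA.gne hx

lemma A.qii (HA : A h g y₀ α) (θ : ℝ) {a b : ℝ} (ha : 0 < a) (hb : 0 < b) :
    IntervalIntegrable (q h g α θ) volume a b :=
  ((HA.qcont θ).mono fun x hx => lt_of_lt_of_le (lt_min ha hb) hx.1).intervalIntegrable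

lemma A.ginvii (HA : A h g y₀ α) {a b : ℝ} (ha : 0 < a) (hb : 0 < b) :
    IntervalIntegrable (fun x => 1 / g x) volume a b := by
  apply ContinuousOn.intervalIntegrable
  apply ContinuousOn.div continuousOn_const
    (HA.gc.mono fun x hx => le_of_lt (lt_of_lt_of_le (lt_min ha hb) hx.1))
    (fun x hx => HA.gne (lt_of_lt_of_le (lt_min ha hb) hx.1))

lemma A.hasDerivAt_E (HA : A h g y₀ α) (θ : ℝ) {y : ℝ} (hy : 0 < y) :
    HasDerivAt (E h g α y₀ θ) (q h g α θ y) y := by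
  apply intervalIntegral.integral_hasDerivAt_right (HA.qii θ HA.y₀pos hy)
    ⟨Ioi 0, Ioi_mem_nhds hy, ((HA.qcont θ).aestronglyMeasurable measurableSet_Ioi)⟩
    ((HA.qcont θ).continuousAt (Ioi_mem_nhds hy))

lemma A.hasDerivAt_W (HA : A h g y₀ α) (θ : ℝ) {y : ℝ} (hy : 0 < y) :
    HasDerivAt (W h g α y₀ θ) (D h g α y₀ θ y) y := by
  have := (HA.hasDerivAt_E θ hy).exp
  show HasDerivAt (fun y => Real.exp (E h g α y₀ θ y)) _ y
  simpa [W, D, mul_comm] using this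

lemma A.Wpos (HA : A h g y₀ α) (θ y : ℝ) : 0 < W h g α y₀ θ y := Real.exp_pos _

lemma A.Wcont (HA : A h g y₀ α) (θ : ℝ) : ContinuousOn (W h g α y₀ θ) (Ioi 0) :=
  fun y hy => (HA.hasDerivAt_W θ hy).continuousAt.continuousWithinAt

lemma A.Pcont (HA : A h g y₀ α) (θ : ℝ) : ContinuousOn (P h g α y₀ θ) (Ioi 0) :=
  (((HA.hc.mono fun x (hx : x ∈ Ioi 0) => mem_Ici.2 (mem_Ioi.1 hx).le).div
    (HA.gc.mono fun x (hx : x ∈ Ioi 0) => mem_Ici.2 (mem_Ioi.1 hx).le) (fun x (hx : x ∈ Ioi 0) => HA.gne hx)).mul (HA.Wcont θ))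

lemma A.Dcont (HA : A h g y₀ α) (θ : ℝ) : ContinuousOn (D h g α y₀ θ) (Ioi 0) :=
  (HA.qcont θ).mul (HA.Wcont θ)

lemma D_eq (θ y : ℝ) : D h g α y₀ θ y
    = α * (θ - y) * (W h g α y₀ θ y / g y) + P h g α y₀ θ y := by
  simp only [D, P, q]; ring

lemma A.E_split (HA : A h g y₀ α) (θ : ℝ) {y : ℝ} (hy : 0 < y) :
    E h g α y₀ θ y = α * θ * G g y₀ y + E h g α y₀ 0 y := by
  have hsub : uIcc y₀ y ⊆ Ioi 0 := fun x hx => lt_of_lt_of_le (lt_min HA.y₀pos hy) hx.1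
  have h1 : E h g α y₀ θ y = ∫ x in y₀..y, (α * θ * (1 / g x) + q h g α 0 x) := by
    apply intervalIntegral.integral_congr
    intro x hx
    have hgx := HA.gne (hsub hx)
    simp only [q]
    field_simp
    ring
  rw [h1, intervalIntegral.integral_add (((HA.ginvii HA.y₀pos hy).const_mul _))
    (HA.qii 0 HA.y₀pos hy), intervalIntegral.integral_const_mul]
  rfl

lemma A.E_diff (HA : A h g y₀ α) (θ₁ θ₂ : ℝ) {y : ℝ} (hy : 0 < y) :
    E h g α y₀ θ₂ y - E h g α y₀ θ₁ y = α * (θ₂ - θ₁) * G g y₀ y := by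
  rw [HA.E_split θ₂ hy, HA.E_split θ₁ hy]; ring

lemma A.G_lt (HA : A h g y₀ α) {a b : ℝ} (ha : 0 < a) (hab : a < b) :
    G g y₀ a < G g y₀ b := by
  have hb : 0 < b := ha.trans hab
  have key : G g y₀ b - G g y₀ a = ∫ x in a..b, 1 / g x :=
    intervalIntegral.integral_interval_sub_left (HA.ginvii HA.y₀pos hb)
      (HA.ginvii HA.y₀pos ha)
  have pos : 0 < ∫ x in a..b, 1 / g x :=
    intervalIntegral.intervalIntegral_pos_of_pos_on (HA.ginvii ha hb)
      (fun x hx => one_div_pos.2 (HA.gpos x (ha.trans hx.1))) hab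
  linarith

lemma G_y₀ : G g y₀ y₀ = 0 := intervalIntegral.integral_same

lemma A.G_nonpos (HA : A h g y₀ α) {y : ℝ} (hy : 0 < y) (hy' : y ≤ y₀) : G g y₀ y ≤ 0 := by
  rcases eq_or_lt_of_le hy' with rfl | hlt
  · exact le_of_eq G_y₀
  · exact le_of_lt (G_y₀ (g := g) (y₀ := y₀) ▸ HA.G_lt hy hlt)

lemma A.G_nonneg (HA : A h g y₀ α) {y : ℝ} (hy' : y₀ ≤ y) : 0 ≤ G g y₀ y := by
  rcases eq_or_lt_of_le hy' with rfl | hlt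
  · exact le_of_eq G_y₀.symm
  · exact le_of_lt (G_y₀ (g := g) (y₀ := y₀) ▸ HA.G_lt HA.y₀pos hlt)

lemma A.G_pos (HA : A h g y₀ α) {y : ℝ} (hy' : y₀ < y) : 0 < G g y₀ y :=
  G_y₀ (g := g) (y₀ := y₀) ▸ HA.G_lt HA.y₀pos hy'

lemma A.tendsto_W_zero (HA : A h g y₀ α) {θ : ℝ} (hθ : 0 < θ) :
    Tendsto (W h g α y₀ θ) (𝓝[>] 0) (𝓝 0) := by
  obtain ⟨K, hK, δ, hδ, hlin⟩ := HA.glin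
  set c := min (min (θ/2) y₀) δ with hcdef
  have hc0 : 0 < c := lt_min (lt_min (by positivity) HA.y₀pos) hδ
  have hcθ : c ≤ θ/2 := le_trans (min_le_left _ _) (min_le_left _ _)
  have hcy₀ : c ≤ y₀ := le_trans (min_le_left _ _) (min_le_right _ _)
  have hcδ : c ≤ δ := min_le_right _ _
  have bound : ∀ y ∈ Ioo (0:ℝ) c,
      E h g α y₀ θ y ≤ E h g α y₀ θ c - (α*θ/(2*K)) * (Real.log c - Real.log y) := by
    intro y hy
    have hy0 : 0 < y := hy.1
    have h1 : E h g α y₀ θ c - E h g α y₀ θ y = ∫ x in y..c, q h g α θ x :=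
      intervalIntegral.integral_interval_sub_left (HA.qii θ HA.y₀pos hc0)
        (HA.qii θ HA.y₀pos hy0)
    have hne : ∀ x ∈ uIcc y c, x ≠ 0 :=
      fun x hx => (lt_of_lt_of_le (lt_min hy0 hc0) hx.1).ne'
    have hii : IntervalIntegrable (fun x => (α*θ/(2*K)) * (1/x)) volume y c :=
      (continuousOn_const.mul (continuousOn_const.div continuousOn_id hne)).intervalIntegrable
    have h2 : ∫ x in y..c, (α*θ/(2*K)) * (1/x) ≤ ∫ x in y..c, q h g α θ x := by
      apply intervalIntegral.integral_mono_on hy.2.le hii (HA.qii θ hy0 hc0)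
      intro x hx
      have hx0 : 0 < x := hy0.trans_le hx.1
      have hhx : 0 ≤ h x := HA.hge x hx0.le (hx.2.trans hcy₀)
      have hgx : 0 < g x := HA.gpos x hx0
      have hgK : g x ≤ K * x := hlin x hx0.le (hx.2.trans hcδ)
      have hxθ : x ≤ θ/2 := hx.2.trans hcθ
      have hαθ : (0:ℝ) ≤ α*θ/2 := by nlinarith [mul_pos HA.αpos hθ]
      have e1 : (α*θ/(2*K)) * (1/x) = (α*θ/2) / (K*x) := by
        field_simp
      rw [e1]
      show (α*θ/2) / (K*x) ≤ q h g α θ x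
      calc (α*θ/2) / (K*x) ≤ (α*θ/2) / g x := by gcongr
        _ ≤ (α * (θ - x) + h x) / g x := by
            gcongr
            nlinarith [mul_nonneg HA.αpos.le (by linarith : (0:ℝ) ≤ θ/2 - x)]
    have h3 : ∫ x in y..c, (α*θ/(2*K)) * (1/x)
        = (α*θ/(2*K)) * (Real.log c - Real.log y) := by
      rw [intervalIntegral.integral_const_mul, integral_one_div
        (fun hmem => (hne 0 hmem) rfl), Real.log_div hc0.ne' hy0.ne']
    linarith
  have hlim : Tendsto (fun y => E h g α y₀ θ c - (α*θ/(2*K)) * (Real.log c - Real.log y))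
      (𝓝[>] (0:ℝ)) atBot := by
    have h4 : Tendsto (fun y : ℝ => (α*θ/(2*K)) * Real.log y) (𝓝[>] (0:ℝ)) atBot :=
      (Real.tendsto_log_nhdsGT_zero).const_mul_atBot
        (div_pos (mul_pos HA.αpos hθ) (by linarith))
    have h5 := tendsto_atBot_add_const_left (𝓝[>] (0:ℝ))
      (E h g α y₀ θ c - (α*θ/(2*K)) * Real.log c) h4
    apply h5.congr
    intro y; ring
  have hE : Tendsto (E h g α y₀ θ) (𝓝[>] (0:ℝ)) atBot := by
    apply tendsto_atBot_mono' _ ?_ hlim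
    filter_upwards [Ioo_mem_nhdsGT hc0] with y hy using bound y hy
  exact Real.tendsto_exp_atBot.comp hE

lemma A.tendsto_W_top (HA : A h g y₀ α) {θ : ℝ} (hθ : 0 ≤ θ) :
    Tendsto (W h g α y₀ θ) atTop (𝓝 0) := by
  obtain ⟨C, hC, M, hM, hgr⟩ := HA.ggrow
  set M' := max M (2*θ + 1) with hM'def
  have hM'M : M ≤ M' := le_max_left _ _
  have hM'θ : 2*θ + 1 ≤ M' := le_max_right _ _
  have hM'0 : 0 < M' := lt_of_lt_of_le (by linarith) hM'θ
  have hM'y₀ : y₀ < M' := lt_of_lt_of_le hM hM'M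
  have bound : ∀ y, M' ≤ y →
      E h g α y₀ θ y ≤ E h g α y₀ θ M' - (α/(2*C)) * (Real.log y - Real.log M') := by
    intro y hy
    have hy0 : 0 < y := hM'0.trans_le hy
    have h1 : E h g α y₀ θ y - E h g α y₀ θ M' = ∫ x in M'..y, q h g α θ x :=
      intervalIntegral.integral_interval_sub_left (HA.qii θ HA.y₀pos hy0)
        (HA.qii θ HA.y₀pos hM'0)
    have hne : ∀ x ∈ uIcc M' y, x ≠ 0 :=
      fun x hx => (lt_of_lt_of_le (lt_min hM'0 hy0) hx.1).ne'
    have hii : IntervalIntegrable (fun x => -(α/(2*C)) * (1/x)) volume M' y :=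
      (continuousOn_const.mul (continuousOn_const.div continuousOn_id hne)).intervalIntegrable
    have h2 : ∫ x in M'..y, q h g α θ x ≤ ∫ x in M'..y, -(α/(2*C)) * (1/x) := by
      apply intervalIntegral.integral_mono_on hy (HA.qii θ hM'0 hy0) hii
      intro x hx
      have hx0 : 0 < x := hM'0.trans_le hx.1
      have hxθ : 2*θ ≤ x := by
        have := hx.1; linarith
      have hhx : h x ≤ 0 := HA.hle x (le_trans hM'y₀.le hx.1)
      have hgx : 0 < g x := HA.gpos x hx0
      have hgC : g x ≤ C * x^2 := hgr x (le_trans hM'M hx.1)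
      have step1 : q h g α θ x ≤ (-(α/2) * x) / g x := by
        show (α * (θ - x) + h x) / g x ≤ (-(α/2) * x) / g x
        apply div_le_div_of_nonneg_right ?_ hgx.le |>.trans_eq rfl
        nlinarith [mul_nonneg HA.αpos.le (by linarith : (0:ℝ) ≤ x/2 - θ), hhx]
      have step2 : (-(α/2) * x) / g x ≤ (-(α/2) * x) / (C * x^2) := by
        have hinv : (C*x^2)⁻¹ ≤ (g x)⁻¹ := by gcongr
        rw [div_eq_mul_inv, div_eq_mul_inv]
        exact mul_le_mul_of_nonpos_left hinv (by nlinarith [mul_pos HA.αpos hx0])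
      have e1 : (-(α/2) * x) / (C * x^2) = -(α/(2*C)) * (1/x) := by
        field_simp
      calc q h g α θ x ≤ (-(α/2) * x) / g x := step1
        _ ≤ (-(α/2) * x) / (C * x^2) := step2
        _ = -(α/(2*C)) * (1/x) := e1
    have h3 : ∫ x in M'..y, -(α/(2*C)) * (1/x)
        = -(α/(2*C)) * (Real.log y - Real.log M') := by
      rw [intervalIntegral.integral_const_mul, integral_one_div
        (fun hmem => (hne 0 hmem) rfl), Real.log_div hy0.ne' hM'0.ne']
    linarith
  have hlim : Tendsto (fun y => E h g α y₀ θ M' - (α/(2*C)) * (Real.log y - Real.log M'))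
      atTop atBot := by
    have h4 : Tendsto (fun y : ℝ => -(α/(2*C)) * Real.log y) atTop atBot :=
      Real.tendsto_log_atTop.const_mul_atTop_of_neg
        (neg_lt_zero.2 (div_pos HA.αpos (by linarith)))
    have h5 := tendsto_atBot_add_const_left atTop
      (E h g α y₀ θ M' + (α/(2*C)) * Real.log M') h4
    apply h5.congr
    intro y; ring
  have hE : Tendsto (E h g α y₀ θ) atTop atBot := by
    apply tendsto_atBot_mono' _ ?_ hlim
    filter_upwards [eventually_ge_atTop M'] with y hy using bound y hy
  exact Real.tendsto_exp_atBot.comp hE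

lemma A.q_nonneg (HA : A h g y₀ α) {θ x : ℝ} (hx : 0 < x) (h1 : x ≤ y₀) (h2 : x ≤ θ) :
    0 ≤ q h g α θ x := by
  apply div_nonneg ?_ (HA.gpos x hx).le
  have := HA.hge x hx.le h1
  nlinarith [mul_nonneg HA.αpos.le (by linarith : (0:ℝ) ≤ θ - x)]

lemma A.q_nonpos (HA : A h g y₀ α) {θ x : ℝ} (h1 : y₀ ≤ x) (h2 : θ ≤ x) :
    q h g α θ x ≤ 0 := by
  apply div_nonpos_of_nonpos_of_nonneg ?_ (HA.gpos x (HA.y₀pos.trans_le h1)).le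
  have := HA.hle x h1
  nlinarith [mul_nonneg HA.αpos.le (by linarith : (0:ℝ) ≤ x - θ)]

lemma A.D_nonneg (HA : A h g y₀ α) {θ x : ℝ} (hx : 0 < x) (h1 : x ≤ y₀) (h2 : x ≤ θ) :
    0 ≤ D h g α y₀ θ x := mul_nonneg (HA.q_nonneg hx h1 h2) (HA.Wpos θ x).le

lemma A.D_nonpos (HA : A h g y₀ α) {θ x : ℝ} (h1 : y₀ ≤ x) (h2 : θ ≤ x) :
    D h g α y₀ θ x ≤ 0 := mul_nonpos_of_nonpos_of_nonneg (HA.q_nonpos h1 h2) (HA.Wpos θ x).le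

lemma A.mid_int (HA : A h g y₀ α) {f : ℝ → ℝ} (hf : ContinuousOn f (Ioi 0)) {a b : ℝ}
    (ha : 0 < a) : IntegrableOn f (Ioc a b) := by
  apply IntegrableOn.mono_set ?_ (Ioc_subset_Icc_self)
  exact (hf.mono (fun x hx => lt_of_lt_of_le ha hx.1)).integrableOn_Icc

lemma A.zero_pkg (HA : A h g y₀ α) {θ : ℝ} (hθ : 0 < θ) :
    ∃ c, 0 < c ∧ c ≤ θ/2 ∧ c ≤ y₀ ∧ IntegrableOn (D h g α y₀ θ) (Ioc 0 c) := by
  set c := min (θ/2) y₀ with hcdef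
  have hc0 : 0 < c := lt_min (half_pos hθ) HA.y₀pos
  refine ⟨c, hc0, min_le_left _ _, min_le_right _ _, ?_⟩
  set Wext : ℝ → ℝ := fun y => if 0 < y then W h g α y₀ θ y else 0 with hWextdef
  have heq : Wext =ᶠ[𝓝[>] (0:ℝ)] W h g α y₀ θ := by
    filter_upwards [self_mem_nhdsWithin] with z hz
    exact if_pos hz
  have hWD : ∀ x ∈ Ioo (0:ℝ) c, HasDerivAt Wext (D h g α y₀ θ x) x := by
    intro x hx
    apply (HA.hasDerivAt_W θ hx.1).congr_of_eventuallyEq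
    filter_upwards [Ioi_mem_nhds hx.1] with z hz
    exact if_pos hz
  have hWcont : ContinuousOn Wext (Icc 0 c) := by
    intro x hx
    rcases eq_or_lt_of_le hx.1 with rfl | hx0
    · apply continuousWithinAt_diff_self.1
      have : Tendsto Wext (𝓝[Icc 0 c \ {0}] 0) (𝓝 0) := by
        apply Tendsto.mono_left ((HA.tendsto_W_zero hθ).congr' heq.symm)
        apply nhdsWithin_mono
        intro z hz
        exact lt_of_le_of_ne hz.1.1 (Ne.symm hz.2)
      have h0 : Wext 0 = 0 := if_neg (lt_irrefl 0)
      rw [ContinuousWithinAt, h0]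
      exact this
    · apply ContinuousWithinAt.mono ?_ (fun z hz => hz)
      apply ((HA.hasDerivAt_W θ hx0).continuousAt.congr ?_).continuousWithinAt
      filter_upwards [Ioi_mem_nhds hx0] with z hz
      exact (if_pos hz).symm
  exact intervalIntegral.integrableOn_deriv_of_nonneg hWcont hWD
    (fun x hx => HA.D_nonneg hx.1 (hx.2.le.trans (min_le_right _ _))
      (le_trans hx.2.le ((min_le_left _ _).trans (by linarith))))

lemma A.top_pkg (HA : A h g y₀ α) {θ : ℝ} (hθ : 0 ≤ θ) :
    ∃ M', y₀ < M' ∧ 2*θ ≤ M' ∧ IntegrableOn (D h g α y₀ θ) (Ioi M') := by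
  set M' := max (y₀+1) (2*θ+1) with hM'def
  have h1 : y₀ < M' := lt_of_lt_of_le (by linarith) (le_max_left _ _)
  have h2 : 2*θ ≤ M' := le_trans (by linarith) (le_max_right _ _)
  have hM'0 : 0 < M' := HA.y₀pos.trans h1
  refine ⟨M', h1, h2, ?_⟩
  apply integrableOn_Ioi_deriv_of_nonpos
    ((HA.Wcont θ).continuousWithinAt (by exact hM'0) |>.mono (fun z hz => lt_of_lt_of_le hM'0 hz))
    (fun x hx => HA.hasDerivAt_W θ (hM'0.trans hx))
    (fun x hx => HA.D_nonpos (h1.le.trans hx.le) (by nlinarith [hx.out, h2]))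
    (HA.tendsto_W_top hθ)

lemma A.intD (HA : A h g y₀ α) {θ : ℝ} (hθ : 0 < θ) :
    IntegrableOn (D h g α y₀ θ) (Ioi 0) := by
  obtain ⟨c, hc0, hcθ, hcy₀, hic⟩ := HA.zero_pkg hθ
  obtain ⟨M', hM'y₀, hM'θ, hiM⟩ := HA.top_pkg hθ.le
  have hcM : c ≤ M' := hcy₀.trans hM'y₀.le
  have hsplit : Ioc 0 c ∪ (Ioc c M' ∪ Ioi M') = Ioi (0:ℝ) := by
    rw [Ioc_union_Ioi_eq_Ioi hcM, Ioc_union_Ioi_eq_Ioi hc0.le]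
  rw [← hsplit]
  exact (hic.union ((HA.mid_int (HA.Dcont θ) hc0).union hiM))

lemma A.intP (HA : A h g y₀ α) {θ : ℝ} (hθ : 0 < θ) :
    IntegrableOn (P h g α y₀ θ) (Ioi 0) := by
  obtain ⟨c, hc0, hcθ, hcy₀, hic⟩ := HA.zero_pkg hθ
  obtain ⟨M', hM'y₀, hM'θ, hiM⟩ := HA.top_pkg hθ.le
  have hcM : c ≤ M' := hcy₀.trans hM'y₀.le
  have hsplit : Ioc 0 c ∪ (Ioc c M' ∪ Ioi M') = Ioi (0:ℝ) := by
    rw [Ioc_union_Ioi_eq_Ioi hcM, Ioc_union_Ioi_eq_Ioi hc0.le]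
  rw [← hsplit]
  have hnear : IntegrableOn (P h g α y₀ θ) (Ioc 0 c) := by
    apply Integrable.mono' hic
      (((HA.Pcont θ).mono (fun x hx => hx.1)).aestronglyMeasurable measurableSet_Ioc)
    rw [ae_restrict_iff' measurableSet_Ioc]
    filter_upwards with y hy
    have hy0 : 0 < y := hy.1
    have hP0 : 0 ≤ P h g α y₀ θ y :=
      mul_nonneg (div_nonneg (HA.hge y hy0.le (hy.2.trans hcy₀)) (HA.gpos y hy0).le)
        (HA.Wpos θ y).le
    rw [Real.norm_of_nonneg hP0]
    rw [D_eq (h := h)]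
    have : 0 ≤ α * (θ - y) * (W h g α y₀ θ y / g y) := by
      apply mul_nonneg (mul_nonneg HA.αpos.le (by linarith [hy.2.trans hcθ]))
      exact div_nonneg (HA.Wpos θ y).le (HA.gpos y hy0).le
    linarith
  have hfar : IntegrableOn (P h g α y₀ θ) (Ioi M') := by
    apply Integrable.mono' hiM.neg
      (((HA.Pcont θ).mono (fun x hx => HA.y₀pos.trans (hM'y₀.trans hx))).aestronglyMeasurable
        measurableSet_Ioi)
    rw [ae_restrict_iff' measurableSet_Ioi]
    filter_upwards with y hy
    have hy0 : 0 < y := HA.y₀pos.trans (hM'y₀.trans hy)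
    have hP0 : P h g α y₀ θ y ≤ 0 :=
      mul_nonpos_of_nonpos_of_nonneg
        (div_nonpos_of_nonpos_of_nonneg (HA.hle y (hM'y₀.le.trans hy.out.le)) (HA.gpos y hy0).le)
        (HA.Wpos θ y).le
    rw [Real.norm_of_nonpos hP0]
    have key : -P h g α y₀ θ y ≤ -(D h g α y₀ θ y) := by
      rw [D_eq]
      have : α * (θ - y) * (W h g α y₀ θ y / g y) ≤ 0 := by
        apply mul_nonpos_of_nonpos_of_nonneg
          (mul_nonpos_of_nonneg_of_nonpos HA.αpos.le (by nlinarith [hy.out]))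
          (div_nonneg (HA.Wpos θ y).le (HA.gpos y hy0).le)
      linarith
    exact key
  exact (hnear.union ((HA.mid_int (HA.Pcont θ) hc0).union hfar))

lemma A.intD_zero_eq (HA : A h g y₀ α) {θ : ℝ} (hθ : 0 < θ) :
    ∫ y in Ioi (0:ℝ), D h g α y₀ θ y = 0 := by
  set u : ℕ → ℝ := fun n => 1/(n+1) with hudef
  have hu0 : ∀ n, 0 < u n := fun n => by positivity
  have huanti : ∀ n m, n ≤ m → u m ≤ u n := by
    intro n m hnm
    apply one_div_le_one_div_of_le (by positivity)
    have : (n:ℝ) ≤ m := Nat.cast_le.mpr hnm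
    linarith
  have hU : (⋃ n, Ioi (u n)) = Ioi (0:ℝ) := by
    apply Subset.antisymm
    · exact iUnion_subset fun n => Ioi_subset_Ioi (hu0 n).le
    · intro x hx
      obtain ⟨n, hn⟩ := exists_nat_one_div_lt (mem_Ioi.1 hx)
      exact mem_iUnion.2 ⟨n, hn⟩
  have hmono : Monotone (fun n => Ioi (u n)) :=
    fun n m hnm => Ioi_subset_Ioi (huanti n m hnm)
  have hlim1 : Tendsto (fun n => ∫ y in Ioi (u n), D h g α y₀ θ y) atTop
      (𝓝 (∫ y in Ioi (0:ℝ), D h g α y₀ θ y)) := by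
    have := tendsto_setIntegral_of_monotone (fun n => measurableSet_Ioi) hmono
      (hU ▸ HA.intD hθ)
    rwa [hU] at this
  have heq : ∀ n, ∫ y in Ioi (u n), D h g α y₀ θ y = 0 - W h g α y₀ θ (u n) := by
    intro n
    apply integral_Ioi_of_hasDerivAt_of_tendsto'
      (fun x hx => HA.hasDerivAt_W θ (lt_of_lt_of_le (hu0 n) hx))
      ((HA.intD hθ).mono_set (Ioi_subset_Ioi (hu0 n).le))
      (HA.tendsto_W_top hθ.le)
  have hlim2 : Tendsto (fun n => ∫ y in Ioi (u n), D h g α y₀ θ y) atTop (𝓝 0) := by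
    simp_rw [heq]
    have hcomp : Tendsto (fun n => W h g α y₀ θ (u n)) atTop (𝓝 0) := by
      apply (HA.tendsto_W_zero hθ).comp
      apply tendsto_nhdsWithin_of_tendsto_nhds_of_eventually_within
      · exact tendsto_one_div_add_atTop_nhds_zero_nat
      · filter_upwards with n using hu0 n
    simpa using hcomp.const_sub 0
  exact tendsto_nhds_unique hlim1 hlim2

lemma A.key (HA : A h g y₀ α) {θ : ℝ} (hθ : 0 < θ) :
    IntegrableOn (fun y => (y - θ) * (W h g α y₀ θ y / g y)) (Ioi 0) ∧
    ∫ y in Ioi (0:ℝ), (y - θ) * (W h g α y₀ θ y / g y) = (F h g α y₀ θ) / α := by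
  have hα : α ≠ 0 := HA.αpos.ne'
  have hcong : EqOn (fun y => α⁻¹ * (P h g α y₀ θ y - D h g α y₀ θ y))
      (fun y => (y - θ) * (W h g α y₀ θ y / g y)) (Ioi 0) := by
    intro y hy
    have hgy : g y ≠ 0 := (HA.gpos y hy).ne'
    simp only
    rw [D_eq]
    field_simp
    ring
  constructor
  · exact IntegrableOn.congr_fun (((HA.intP hθ).sub (HA.intD hθ)).const_mul _) hcong
      measurableSet_Ioi
  · rw [← setIntegral_congr_fun measurableSet_Ioi hcong, MeasureTheory.integral_const_mul,
      integral_sub (HA.intP hθ) (HA.intD hθ), HA.intD_zero_eq hθ, sub_zero, inv_mul_eq_div]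
    rfl

lemma A.W_ratio (HA : A h g y₀ α) (θ₁ θ₂ : ℝ) {y : ℝ} (hy : 0 < y) :
    W h g α y₀ θ₂ y = W h g α y₀ θ₁ y * Real.exp (α * (θ₂ - θ₁) * G g y₀ y) := by
  rw [W, W, ← Real.exp_add]
  congr 1
  rw [HA.E_split θ₂ hy, HA.E_split θ₁ hy]
  ring

lemma A.P_mono_pt (HA : A h g y₀ α) {θ₁ θ₂ : ℝ} (h12 : θ₁ ≤ θ₂) {y : ℝ} (hy : 0 < y) :
    P h g α y₀ θ₂ y ≤ P h g α y₀ θ₁ y := by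
  have hrat := HA.W_ratio θ₁ θ₂ hy
  rcases le_or_gt y y₀ with hyy | hyy
  · have hG : G g y₀ y ≤ 0 := HA.G_nonpos hy hyy
    have hexp : Real.exp (α * (θ₂ - θ₁) * G g y₀ y) ≤ 1 := by
      rw [← Real.exp_zero]
      apply Real.exp_le_exp.2
      nlinarith [mul_nonneg HA.αpos.le (by linarith : (0:ℝ) ≤ θ₂ - θ₁)]
    have hW : W h g α y₀ θ₂ y ≤ W h g α y₀ θ₁ y := by
      rw [hrat]
      nlinarith [HA.Wpos θ₁ y]
    exact mul_le_mul_of_nonneg_left hW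
      (div_nonneg (HA.hge y hy.le hyy) (HA.gpos y hy).le)
  · have hG : 0 ≤ G g y₀ y := HA.G_nonneg hyy.le
    have hexp : 1 ≤ Real.exp (α * (θ₂ - θ₁) * G g y₀ y) := by
      rw [← Real.exp_zero]
      apply Real.exp_le_exp.2
      nlinarith [mul_nonneg HA.αpos.le (by linarith : (0:ℝ) ≤ θ₂ - θ₁)]
    have hW : W h g α y₀ θ₁ y ≤ W h g α y₀ θ₂ y := by
      rw [hrat]
      nlinarith [HA.Wpos θ₁ y]
    exact mul_le_mul_of_nonpos_left hW
      (div_nonpos_of_nonpos_of_nonneg (HA.hle y hyy.le) (HA.gpos y hy).le)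

lemma A.P_W_lt (HA : A h g y₀ α) {θ₁ θ₂ : ℝ} (h12 : θ₁ < θ₂) {y : ℝ} (hy₀y : y₀ < y)
    (hhy : h y < 0) : P h g α y₀ θ₂ y < P h g α y₀ θ₁ y := by
  have hy : 0 < y := HA.y₀pos.trans hy₀y
  have hrat := HA.W_ratio θ₁ θ₂ hy
  have hG : 0 < G g y₀ y := HA.G_pos hy₀y
  have hexp : 1 < Real.exp (α * (θ₂ - θ₁) * G g y₀ y) := by
    rw [← Real.exp_zero]
    apply Real.exp_lt_exp.2
    exact mul_pos (mul_pos HA.αpos (by linarith)) hG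
  have hW : W h g α y₀ θ₁ y < W h g α y₀ θ₂ y := by
    rw [hrat]
    nlinarith [HA.Wpos θ₁ y]
  exact mul_lt_mul_of_neg_left hW (div_neg_of_neg_of_pos hhy (HA.gpos y hy))

lemma A.patch (HA : A h g y₀ α) : ∃ u v, y₀ < u ∧ u < v ∧ ∀ x ∈ Icc u v, h x < 0 := by
  obtain ⟨y', hy', hneg⟩ := HA.hneg
  have hy'0 : 0 < y' := HA.y₀pos.trans hy'
  have h1 : h ⁻¹' (Iio 0) ∈ 𝓝 y' := (HA.hcont' hy'0) (isOpen_Iio.mem_nhds hneg)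
  have h2 : Ioi y₀ ∈ 𝓝 y' := isOpen_Ioi.mem_nhds hy'
  obtain ⟨ε, hε, hball⟩ := Metric.mem_nhds_iff.1 (inter_mem h1 h2)
  refine ⟨y' - ε/4, y' + ε/4, ?_, by linarith, ?_⟩
  · have : y' - ε/4 ∈ Metric.ball y' ε := by
      rw [Metric.mem_ball, Real.dist_eq, abs_lt]
      constructor <;> linarith
    exact (hball this).2
  · intro x hx
    have : x ∈ Metric.ball y' ε := by
      rw [Metric.mem_ball, Real.dist_eq, abs_lt]
      cases' hx with h3 h4
      constructor <;> linarith
    exact (hball this).1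

lemma A.F_anti (HA : A h g y₀ α) {θ₁ θ₂ : ℝ} (h1 : 0 < θ₁) (h12 : θ₁ < θ₂) :
    F h g α y₀ θ₂ < F h g α y₀ θ₁ := by
  obtain ⟨u, v, huy₀, huv, hpatch⟩ := HA.patch
  have hu0 : 0 < u := HA.y₀pos.trans huy₀
  set f : ℝ → ℝ := fun y => P h g α y₀ θ₁ y - P h g α y₀ θ₂ y with hfdef
  have hfint : IntegrableOn f (Ioi 0) := (HA.intP h1).sub (HA.intP (h1.trans h12))
  have hfnn : ∀ y ∈ Ioi (0:ℝ), 0 ≤ f y := fun y hy => by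
    simp only [hfdef, sub_nonneg]
    exact HA.P_mono_pt h12.le hy
  have hsub : Ioc u v ⊆ Ioi (0:ℝ) := fun x hx => hu0.trans hx.1
  have hlow : ∫ y in Ioc u v, f y ≤ ∫ y in Ioi 0, f y := by
    apply setIntegral_mono_set hfint
    · exact (ae_restrict_iff' measurableSet_Ioi).mpr (Eventually.of_forall hfnn)
    · exact HasSubset.Subset.eventuallyLE hsub
  have hpos : 0 < ∫ y in Ioc u v, f y := by
    rw [← intervalIntegral.integral_of_le huv.le]
    apply intervalIntegral.intervalIntegral_pos_of_pos_on
    · rw [intervalIntegrable_iff_integrableOn_Ioc_of_le huv.le]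
      exact hfint.mono_set hsub
    · intro x hx
      simp only [hfdef, sub_pos]
      exact HA.P_W_lt h12 (huy₀.trans hx.1) (hpatch x ⟨hx.1.le, hx.2.le⟩)
    · exact huv
  have : 0 < ∫ y in Ioi 0, f y := lt_of_lt_of_le hpos hlow
  have hdiff : ∫ y in Ioi 0, f y = F h g α y₀ θ₁ - F h g α y₀ θ₂ :=
    integral_sub (HA.intP h1) (HA.intP (h1.trans h12))
  linarith

lemma A.P_theta_cont (HA : A h g y₀ α) {y : ℝ} (hy : 0 < y) :
    Continuous (fun θ' => P h g α y₀ θ' y) := by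
  have hrw : (fun θ' => P h g α y₀ θ' y)
      = fun θ' => h y / g y * Real.exp (α * θ' * G g y₀ y + E h g α y₀ 0 y) := by
    funext θ'
    rw [P, W, HA.E_split θ' hy]
  rw [hrw]
  continuity

lemma A.F_contAt (HA : A h g y₀ α) {θ : ℝ} (hθ : 0 < θ) :
    ContinuousAt (F h g α y₀) θ := by
  apply MeasureTheory.continuousAt_of_dominated
    (bound := fun y => |P h g α y₀ (θ/2) y| + |P h g α y₀ (θ+1) y|)
  · exact Eventually.of_forall fun θ' =>
      ((HA.Pcont θ').aestronglyMeasurable measurableSet_Ioi)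
  · filter_upwards [Ioo_mem_nhds (by linarith : θ/2 < θ) (by linarith : θ < θ+1)] with θ' hθ'
    rw [ae_restrict_iff' measurableSet_Ioi]
    filter_upwards with y hy
    rcases le_or_gt y y₀ with hyy | hyy
    · have h1 : 0 ≤ P h g α y₀ θ' y :=
        mul_nonneg (div_nonneg (HA.hge y hy.out.le hyy) (HA.gpos y hy).le) (HA.Wpos θ' y).le
      rw [Real.norm_eq_abs, abs_of_nonneg h1]
      have h2 : P h g α y₀ θ' y ≤ P h g α y₀ (θ/2) y := HA.P_mono_pt hθ'.1.le hy
      have h3 : P h g α y₀ (θ/2) y ≤ |P h g α y₀ (θ/2) y| := le_abs_self _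
      have h4 : (0:ℝ) ≤ |P h g α y₀ (θ+1) y| := abs_nonneg _
      linarith
    · have h1 : P h g α y₀ θ' y ≤ 0 :=
        mul_nonpos_of_nonpos_of_nonneg
          (div_nonpos_of_nonpos_of_nonneg (HA.hle y hyy.le) (HA.gpos y hy).le)
          (HA.Wpos θ' y).le
      rw [Real.norm_eq_abs, abs_of_nonpos h1]
      have h2 : P h g α y₀ (θ+1) y ≤ P h g α y₀ θ' y := HA.P_mono_pt hθ'.2.le hy
      have h3 : -P h g α y₀ (θ+1) y ≤ |P h g α y₀ (θ+1) y| := neg_le_abs _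
      have h4 : (0:ℝ) ≤ |P h g α y₀ (θ/2) y| := abs_nonneg _
      linarith
  · exact ((HA.intP (by linarith)).abs.add ((HA.intP (by linarith)).abs))
  · rw [ae_restrict_iff' measurableSet_Ioi]
    filter_upwards with y hy
    exact (HA.P_theta_cont hy).continuousAt

lemma A.F_split (HA : A h g y₀ α) {θ : ℝ} (hθ : 0 < θ) :
    F h g α y₀ θ = (∫ y in Ioc 0 y₀, P h g α y₀ θ y) + ∫ y in Ioi y₀, P h g α y₀ θ y := by
  rw [F, ← Ioc_union_Ioi_eq_Ioi HA.y₀pos.le,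
    setIntegral_union (Ioc_disjoint_Ioi le_rfl) measurableSet_Ioi
      ((HA.intP hθ).mono_set (fun x hx => hx.1))
      ((HA.intP hθ).mono_set (fun x hx => HA.y₀pos.trans hx))]

lemma locLip_continuousOn {f : ℝ → ℝ} (hf : LocLipOn f (Ici 0)) :
    ContinuousOn f (Ici 0) := by
  intro x hx
  obtain ⟨K, t, ht, hlip⟩ := hf x hx
  have hxt : x ∈ t := mem_of_mem_nhdsWithin hx ht
  exact (hlip.continuousOn x hxt).mono_of_mem_nhdsWithin ht

lemma mkA (h g : ℝ → ℝ)
    (hhlip : LocLipOn h (Ici 0)) (hglip : LocLipOn g (Ici 0))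
    (hh0 : h 0 = 0) (hg0 : g 0 = 0)
    (hgnn : ∀ x ∈ Ici (0:ℝ), 0 ≤ g x) (hgpos : ∀ x ∈ Ioi (0:ℝ), 0 < g x)
    (hgrow : ∃ Cg : ℝ, ∀ᶠ x in atTop, Real.sqrt (g x) / x ≤ Cg)
    (y₀ : ℝ) (hy₀ : 0 < y₀)
    (hhge : ∀ x ∈ Icc (0:ℝ) y₀, 0 ≤ h x) (hhle : ∀ x ∈ Ici y₀, h x ≤ 0)
    (hhne : ∃ y, y₀ ≤ y ∧ h y ≠ 0)
    (α : ℝ) (hα : 0 < α) : A h g y₀ α := by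
  constructor
  · exact locLip_continuousOn hhlip
  · exact locLip_continuousOn hglip
  · exact fun x hx => hgpos x hx
  · exact hy₀
  · exact fun x h1 h2 => hhge x ⟨h1, h2⟩
  · exact fun x h1 => hhle x h1
  · exact hα
  · -- glin
    obtain ⟨K, t, ht, hlip⟩ := hglip 0 (mem_Ici.2 (le_refl 0))
    obtain ⟨u, huo, hu0, hut⟩ := mem_nhdsWithin.1 ht
    obtain ⟨δ, hδ, hball⟩ := Metric.isOpen_iff.1 huo 0 hu0
    refine ⟨(K:ℝ) + 1, by positivity, δ/2, by positivity, ?_⟩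
    intro x hx1 hx2
    have hxu : x ∈ u := hball (by rw [Metric.mem_ball, Real.dist_eq, sub_zero, abs_of_nonneg hx1]; linarith)
    have hxt : x ∈ t := hut ⟨hxu, hx1⟩
    have h0t : (0:ℝ) ∈ t := hut ⟨hu0, mem_Ici.2 (le_refl 0)⟩
    have := hlip.dist_le_mul x hxt 0 h0t
    rw [Real.dist_eq, Real.dist_eq, hg0, sub_zero, sub_zero, abs_of_nonneg hx1] at this
    have h2 : g x ≤ (K:ℝ) * x := le_trans (le_abs_self _) this
    nlinarith
  · -- ggrow
    obtain ⟨Cg, hev⟩ := hgrow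
    obtain ⟨x₁, hx₁⟩ := eventually_atTop.1 hev
    set C := (max Cg 1)^2 with hC
    refine ⟨C, by positivity, max x₁ (y₀+1), lt_of_lt_of_le (by linarith) (le_max_right _ _), ?_⟩
    intro x hx
    have hx0 : 0 < x := lt_of_lt_of_le (by linarith) (le_trans (le_max_right _ _) hx)
    have h1 : Real.sqrt (g x) / x ≤ Cg := hx₁ x (le_trans (le_max_left _ _) hx)
    have h2 : Real.sqrt (g x) ≤ max Cg 1 * x := by
      rw [div_le_iff₀ hx0] at h1
      exact le_trans h1 (by nlinarith [le_max_left Cg 1])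
    have h3 : g x = Real.sqrt (g x) ^ 2 := (Real.sq_sqrt (hgnn x hx0.le)).symm
    rw [h3, hC]
    calc Real.sqrt (g x) ^ 2 ≤ (max Cg 1 * x)^2 := by
          apply sq_le_sq' ?_ h2
          have := Real.sqrt_nonneg (g x)
          nlinarith [le_max_right Cg 1]
      _ = (max Cg 1)^2 * x^2 := by ring
  · -- hneg
    obtain ⟨y, hy1, hy2⟩ := hhne
    rcases eq_or_lt_of_le hy1 with rfl | hlt
    · exact absurd (le_antisymm (hhle y₀ (mem_Ici.2 (le_refl y₀))) (hhge y₀ ⟨hy₀.le, le_refl y₀⟩)) hy2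
    · exact ⟨y, hlt, lt_of_le_of_ne (hhle y hy1) hy2⟩



lemma A.G_mono (HA : A h g y₀ α) {a b : ℝ} (ha : 0 < a) (hab : a ≤ b) :
    G g y₀ a ≤ G g y₀ b := by
  rcases eq_or_lt_of_le hab with rfl | hlt
  · exact le_refl _
  · exact (HA.G_lt ha hlt).le

lemma A.P_low_nonneg (HA : A h g y₀ α) (θ : ℝ) {y : ℝ} (hy : 0 < y) (hyy : y ≤ y₀) :
    0 ≤ P h g α y₀ θ y :=
  mul_nonneg (div_nonneg (HA.hge y hy.le hyy) (HA.gpos y hy).le) (HA.Wpos θ y).le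

lemma A.P_high_nonpos (HA : A h g y₀ α) (θ : ℝ) {y : ℝ} (hyy : y₀ ≤ y) :
    P h g α y₀ θ y ≤ 0 :=
  mul_nonpos_of_nonpos_of_nonneg
    (div_nonpos_of_nonpos_of_nonneg (HA.hle y hyy) (HA.gpos y (HA.y₀pos.trans_le hyy)).le)
    (HA.Wpos θ y).le

lemma A.int_low (HA : A h g y₀ α) {θ : ℝ} (hθ : 0 < θ) :
    IntegrableOn (P h g α y₀ θ) (Ioc 0 y₀) := (HA.intP hθ).mono_set fun x hx => hx.1

lemma A.int_high (HA : A h g y₀ α) {θ : ℝ} (hθ : 0 < θ) :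
    IntegrableOn (P h g α y₀ θ) (Ioi y₀) :=
  (HA.intP hθ).mono_set fun x hx => HA.y₀pos.trans hx

lemma A.int_high0 (HA : A h g y₀ α) : IntegrableOn (P h g α y₀ 0) (Ioi y₀) := by
  apply Integrable.mono' (HA.int_high one_pos).neg
    (((HA.Pcont 0).mono (fun x (hx : x ∈ Ioi y₀) => HA.y₀pos.trans hx)).aestronglyMeasurable
      measurableSet_Ioi)
  rw [ae_restrict_iff' measurableSet_Ioi]
  filter_upwards with y hy
  have hy0 : 0 < y := HA.y₀pos.trans hy
  rw [Real.norm_of_nonpos (HA.P_high_nonpos 0 hy.out.le)]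
  simp only [Pi.neg_apply]
  have := HA.P_mono_pt (zero_le_one) hy0
  linarith

lemma A.diff_int_pos (HA : A h g y₀ α) {θ₁ θ₂ : ℝ} (h12 : θ₁ < θ₂)
    (hi1 : IntegrableOn (P h g α y₀ θ₁) (Ioi y₀))
    (hi2 : IntegrableOn (P h g α y₀ θ₂) (Ioi y₀)) :
    0 < ∫ y in Ioi y₀, (P h g α y₀ θ₁ y - P h g α y₀ θ₂ y) := by
  obtain ⟨u, v, huy₀, huv, hpatch⟩ := HA.patch
  have hu0 : 0 < u := HA.y₀pos.trans huy₀
  set f : ℝ → ℝ := fun y => P h g α y₀ θ₁ y - P h g α y₀ θ₂ y with hfdef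
  have hfint : IntegrableOn f (Ioi y₀) := hi1.sub hi2
  have hfnn : ∀ y ∈ Ioi y₀, 0 ≤ f y := fun y hy => by
    simp only [hfdef, sub_nonneg]
    exact HA.P_mono_pt h12.le (HA.y₀pos.trans hy)
  have hsub : Ioc u v ⊆ Ioi y₀ := fun x hx => huy₀.trans_le hx.1.le
  have hlow : ∫ y in Ioc u v, f y ≤ ∫ y in Ioi y₀, f y := by
    apply setIntegral_mono_set hfint
    · exact (ae_restrict_iff' measurableSet_Ioi).mpr (Eventually.of_forall hfnn)
    · exact HasSubset.Subset.eventuallyLE hsub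
  have hpos : 0 < ∫ y in Ioc u v, f y := by
    rw [← intervalIntegral.integral_of_le huv.le]
    apply intervalIntegral.intervalIntegral_pos_of_pos_on
    · rw [intervalIntegrable_iff_integrableOn_Ioc_of_le huv.le]
      exact hfint.mono_set hsub
    · intro x hx
      simp only [hfdef, sub_pos]
      exact HA.P_W_lt h12 (huy₀.trans hx.1) (hpatch x ⟨hx.1.le, hx.2.le⟩)
    · exact huv
  linarith


lemma A.Nr_nonneg (HA : A h g y₀ α) : 0 ≤ ∫ y in Ioi y₀, -P h g α y₀ 0 y :=
  setIntegral_nonneg measurableSet_Ioi fun y hy =>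
    neg_nonneg.2 (HA.P_high_nonpos 0 hy.out.le)



end S8

/-- The analytic core of Lemma 5.1: there exists `θ > 0` with
`∫_0^∞ (y-θ)Φ_θ(y) dy = 0` if and only if the (possibly `+∞`-valued) integral
`∫_0^∞ (h(y)/g(y)) exp(∫_{y₀}^y (-αx+h(x))/g(x) dx) dy` is `> 0` (i.e. its positive
part exceeds its negative part); moreover such `θ` is unique. -/
theorem stmt8 (h g : ℝ → ℝ)
    (hhlip : LocLipOn h (Ici 0)) (hglip : LocLipOn g (Ici 0))
    (hh0 : h 0 = 0) (hg0 : g 0 = 0)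
    (hgnn : ∀ x ∈ Ici (0:ℝ), 0 ≤ g x) (hgpos : ∀ x ∈ Ioi (0:ℝ), 0 < g x)
    (hgrow : ∃ Cg : ℝ, ∀ᶠ x in atTop, Real.sqrt (g x) / x ≤ Cg)
    (y₀ : ℝ) (hy₀ : 0 < y₀)
    (hhge : ∀ x ∈ Icc (0:ℝ) y₀, 0 ≤ h x) (hhle : ∀ x ∈ Ici y₀, h x ≤ 0)
    (hhne : ∃ y, y₀ ≤ y ∧ h y ≠ 0)
    (α : ℝ) (hα : 0 < α)
    (Φ : ℝ → ℝ → ℝ)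
    (hΦ : ∀ θ y, Φ θ y =
      (1 / g y) * Real.exp (∫ x in y₀..y, (α * (θ - x) + h x) / g x))
    (ψ : ℝ → ℝ)
    (hψ : ∀ y, ψ y = h y / g y * Real.exp (∫ x in y₀..y, (-α * x + h x) / g x)) :
    ((∃ θ : ℝ, 0 < θ ∧ ∫ y in Ioi (0:ℝ), (y - θ) * Φ θ y = 0) ↔
      (∫⁻ y in Ioi (0:ℝ), ENNReal.ofReal (-ψ y)) <
        ∫⁻ y in Ioi (0:ℝ), ENNReal.ofReal (ψ y)) ∧
    (∀ θ₁ θ₂ : ℝ, 0 < θ₁ → 0 < θ₂ →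
      (∫ y in Ioi (0:ℝ), (y - θ₁) * Φ θ₁ y) = 0 →
      (∫ y in Ioi (0:ℝ), (y - θ₂) * Φ θ₂ y) = 0 → θ₁ = θ₂) := by
  have hA : S8.A h g y₀ α :=
    S8.mkA h g hhlip hglip hh0 hg0 hgnn hgpos hgrow y₀ hy₀ hhge hhle hhne α hα
  -- ψ agrees with P 0
  have hψP : ∀ y : ℝ, ψ y = S8.P h g α y₀ 0 y := by
    intro y
    rw [hψ y]
    have : (fun x => (-α * x + h x) / g x) = S8.q h g α 0 := by
      funext x
      rw [S8.q]
      ring_nf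
    rw [S8.P, S8.W, S8.E, this]
  -- the root equation in terms of F
  have key_root : ∀ θ : ℝ, 0 < θ →
      ((∫ y in Ioi (0:ℝ), (y - θ) * Φ θ y) = 0 ↔ S8.F h g α y₀ θ = 0) := by
    intro θ hθ
    have h0 : (fun y => (y - θ) * Φ θ y)
        = fun y => (y - θ) * (S8.W h g α y₀ θ y / g y) := by
      funext y
      rw [hΦ θ y, one_div_mul_eq_div]
      rfl
    rw [show (∫ y in Ioi (0:ℝ), (y - θ) * Φ θ y)
        = ∫ y in Ioi (0:ℝ), (y - θ) * (S8.W h g α y₀ θ y / g y) from by rw [h0],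
      (hA.key hθ).2, div_eq_zero_iff]
    constructor
    · rintro (hF | habs)
      · exact hF
      · exact absurd habs hα.ne'
    · exact fun hF => Or.inl hF
  -- N and P-side lintegral computations
  set Nr : ℝ := ∫ y in Ioi y₀, -S8.P h g α y₀ 0 y with hNrdef
  have hNr0 : 0 ≤ Nr := hA.Nr_nonneg
  have hNψ : (∫⁻ y in Ioi (0:ℝ), ENNReal.ofReal (-ψ y)) = ENNReal.ofReal Nr := by
    have e1 : (∫⁻ y in Ioi (0:ℝ), ENNReal.ofReal (-ψ y))
        = ∫⁻ y in Ioi (0:ℝ), ENNReal.ofReal (-S8.P h g α y₀ 0 y) :=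
      setLIntegral_congr_fun measurableSet_Ioi
        (fun y _ => by rw [hψP y])
    rw [e1, ← Ioc_union_Ioi_eq_Ioi hy₀.le,
      lintegral_union measurableSet_Ioi (Ioc_disjoint_Ioi le_rfl)]
    have e2 : (∫⁻ y in Ioc (0:ℝ) y₀, ENNReal.ofReal (-S8.P h g α y₀ 0 y)) = 0 := by
      rw [setLIntegral_congr_fun measurableSet_Ioc
        (fun y hy => ENNReal.ofReal_eq_zero.2
          (neg_nonpos.2 (hA.P_low_nonneg 0 hy.1 hy.2))), lintegral_zero]
    rw [e2, zero_add]
    have hng : IntegrableOn (fun y => -S8.P h g α y₀ 0 y) (Ioi y₀) := hA.int_high0.neg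
    rw [← ofReal_integral_eq_lintegral_ofReal hng
      ((ae_restrict_iff' measurableSet_Ioi).mpr (ae_of_all _ fun y hy =>
        neg_nonneg.2 (hA.P_high_nonpos 0 hy.out.le)))]
  set PL : ENNReal := ∫⁻ y in Ioc (0:ℝ) y₀, ENNReal.ofReal (S8.P h g α y₀ 0 y) with hPLdef
  have hPψ : (∫⁻ y in Ioi (0:ℝ), ENNReal.ofReal (ψ y)) = PL := by
    have e1 : (∫⁻ y in Ioi (0:ℝ), ENNReal.ofReal (ψ y))
        = ∫⁻ y in Ioi (0:ℝ), ENNReal.ofReal (S8.P h g α y₀ 0 y) :=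
      setLIntegral_congr_fun measurableSet_Ioi
        (fun y _ => by rw [hψP y])
    rw [e1, ← Ioc_union_Ioi_eq_Ioi hy₀.le,
      lintegral_union measurableSet_Ioi (Ioc_disjoint_Ioi le_rfl)]
    have e2 : (∫⁻ y in Ioi y₀, ENNReal.ofReal (S8.P h g α y₀ 0 y)) = 0 := by
      rw [setLIntegral_congr_fun measurableSet_Ioi
        (fun y hy => ENNReal.ofReal_eq_zero.2
          (hA.P_high_nonpos 0 hy.out.le)), lintegral_zero]
    rw [e2, add_zero]
  constructor
  constructor
  · -- forward: root exists → N < P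
    rintro ⟨θ, hθ, hroot⟩
    have hF0 : S8.F h g α y₀ θ = 0 := (key_root θ hθ).1 hroot
    have hsplit := hA.F_split hθ
    set Ar := ∫ y in Ioc (0:ℝ) y₀, S8.P h g α y₀ θ y with hArdef
    set Br := ∫ y in Ioi y₀, S8.P h g α y₀ θ y with hBrdef
    have hd : 0 < ∫ y in Ioi y₀, (S8.P h g α y₀ 0 y - S8.P h g α y₀ θ y) :=
      hA.diff_int_pos hθ hA.int_high0 (hA.int_high hθ)
    have hd2 : (∫ y in Ioi y₀, (S8.P h g α y₀ 0 y - S8.P h g α y₀ θ y))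
        = -Nr - Br := by
      rw [integral_sub hA.int_high0 (hA.int_high hθ), hNrdef, MeasureTheory.integral_neg]
      ring
    have hNrBr : Nr < -Br := by rw [hd2] at hd; linarith
    have hArBr : Ar = -Br := by linarith [hsplit, hF0]
    have hofAr : ENNReal.ofReal Ar ≤ PL := by
      rw [hArdef, ofReal_integral_eq_lintegral_ofReal (hA.int_low hθ)
        ((ae_restrict_iff' measurableSet_Ioc).mpr (ae_of_all _ fun y hy =>
          hA.P_low_nonneg θ hy.1 hy.2))]
      apply lintegral_mono_ae
      rw [ae_restrict_iff' measurableSet_Ioc]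
      filter_upwards with y hy
      exact ENNReal.ofReal_le_ofReal (hA.P_mono_pt hθ.le hy.1)
    rw [hNψ, hPψ]
    calc ENNReal.ofReal Nr < ENNReal.ofReal (-Br) :=
          (ENNReal.ofReal_lt_ofReal_iff_of_nonneg hNr0).2 hNrBr
      _ = ENNReal.ofReal Ar := by rw [hArBr]
      _ ≤ PL := hofAr
  · -- backward: N < P → root exists
    intro hlt
    rw [hNψ, hPψ] at hlt
    obtain ⟨u, v, huy₀, huv, hpatch⟩ := hA.patch
    have hu0 : 0 < u := hy₀.trans huy₀
    have hGu : 0 < S8.G g y₀ u := hA.G_pos huy₀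
    -- negative integral S over the patch
    set S : ℝ := ∫ y in Ioc u v, S8.P h g α y₀ 0 y with hSdef
    have hSneg : S < 0 := by
      have hpos : 0 < ∫ y in Ioc u v, -S8.P h g α y₀ 0 y := by
        rw [← intervalIntegral.integral_of_le huv.le]
        apply intervalIntegral.intervalIntegral_pos_of_pos_on
        · rw [intervalIntegrable_iff_integrableOn_Ioc_of_le huv.le]
          exact (hA.mid_int (hA.Pcont 0) hu0).neg
        · intro x hx
          have hx0 : 0 < x := hu0.trans hx.1
          apply neg_pos.2
          apply mul_neg_of_neg_of_pos
          exact div_neg_of_neg_of_pos (hpatch x ⟨hx.1.le, hx.2.le⟩) (hA.gpos x hx0)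
          exact hA.Wpos 0 x
        · exact huv
      rw [MeasureTheory.integral_neg] at hpos
      linarith
    -- Br θ ≤ exp(αθ G u) * S for θ ≥ 0
    have hBr_bound : ∀ θ : ℝ, 0 < θ →
        (∫ y in Ioi y₀, S8.P h g α y₀ θ y) ≤ Real.exp (α * θ * S8.G g y₀ u) * S := by
      intro θ hθ
      have step1 : (∫ y in Ioi y₀, S8.P h g α y₀ θ y) ≤ ∫ y in Ioc u v, S8.P h g α y₀ θ y := by
        have hmono : ∫ y in Ioc u v, -S8.P h g α y₀ θ y
            ≤ ∫ y in Ioi y₀, -S8.P h g α y₀ θ y := by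
          apply setIntegral_mono_set (hA.int_high hθ).neg
          · exact (ae_restrict_iff' measurableSet_Ioi).mpr (ae_of_all _ fun y hy =>
              neg_nonneg.2 (hA.P_high_nonpos θ hy.out.le))
          · exact HasSubset.Subset.eventuallyLE fun x hx => huy₀.trans_le hx.1.le
        rw [MeasureTheory.integral_neg, MeasureTheory.integral_neg] at hmono
        linarith
      have step2 : (∫ y in Ioc u v, S8.P h g α y₀ θ y)
          ≤ ∫ y in Ioc u v, S8.P h g α y₀ 0 y * Real.exp (α * θ * S8.G g y₀ u) := by
        apply setIntegral_mono_on
        · exact (hA.intP hθ).mono_set fun x hx => hu0.trans hx.1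
        · exact ((hA.mid_int (hA.Pcont 0) hu0).mul_const _)
        · exact measurableSet_Ioc
        · intro y hy
          have hy0 : 0 < y := hu0.trans hy.1
          have hrat := hA.W_ratio 0 θ hy0
          have hPtheta : S8.P h g α y₀ θ y
              = S8.P h g α y₀ 0 y * Real.exp (α * θ * S8.G g y₀ y) := by
            rw [S8.P, S8.P, hrat]
            ring_nf
          rw [hPtheta]
          apply mul_le_mul_of_nonpos_left ?_ ?_
          · apply Real.exp_le_exp.2
            have := hA.G_mono hu0 hy.1.le
            nlinarith [mul_pos hα hθ]
          · exact mul_nonpos_of_nonpos_of_nonneg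
              (div_nonpos_of_nonpos_of_nonneg
                (hA.hle y ((huy₀.trans_le hy.1.le).le)) (hA.gpos y hy0).le)
              (hA.Wpos 0 y).le
      have step3 : (∫ y in Ioc u v, S8.P h g α y₀ 0 y * Real.exp (α * θ * S8.G g y₀ u))
          = S * Real.exp (α * θ * S8.G g y₀ u) := integral_mul_const _ _
      calc (∫ y in Ioi y₀, S8.P h g α y₀ θ y) ≤ _ := step1
        _ ≤ _ := step2
        _ = S * Real.exp (α * θ * S8.G g y₀ u) := step3
        _ = Real.exp (α * θ * S8.G g y₀ u) * S := mul_comm _ _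
    -- θb with F θb < 0
    have hθb : ∃ θb : ℝ, 1 ≤ θb ∧ S8.F h g α y₀ θb < 0 := by
      set A1 : ℝ := ∫ y in Ioc (0:ℝ) y₀, S8.P h g α y₀ 1 y with hA1def
      have hexp_top : Tendsto (fun θ : ℝ => Real.exp (α * θ * S8.G g y₀ u)) atTop atTop := by
        apply Real.tendsto_exp_atTop.comp
        have base : Tendsto (fun θ : ℝ => θ * (α * S8.G g y₀ u)) atTop atTop :=
          Tendsto.atTop_mul_const (mul_pos hα hGu) tendsto_id
        apply base.congr
        intro θ; ring
      have hlim : Tendsto (fun θ : ℝ => A1 + Real.exp (α * θ * S8.G g y₀ u) * S)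
          atTop atBot := by
        apply tendsto_atBot_add_const_left
        exact Tendsto.atTop_mul_const_of_neg hSneg hexp_top
      obtain ⟨θb, hθb1, hθbneg⟩ : ∃ θb : ℝ, 1 ≤ θb ∧
          A1 + Real.exp (α * θb * S8.G g y₀ u) * S < 0 := by
        have hev := (hlim.eventually (eventually_lt_atBot (0:ℝ))).and (eventually_ge_atTop 1)
        obtain ⟨θb, h1, h2⟩ := hev.exists
        exact ⟨θb, h2, h1⟩
      have hθb0 : (0:ℝ) < θb := lt_of_lt_of_le one_pos hθb1
      refine ⟨θb, hθb1, ?_⟩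
      rw [hA.F_split hθb0]
      have hAr_le : (∫ y in Ioc (0:ℝ) y₀, S8.P h g α y₀ θb y) ≤ A1 := by
        apply setIntegral_mono_on (hA.int_low hθb0) (hA.int_low one_pos) measurableSet_Ioc
        exact fun y hy => hA.P_mono_pt hθb1 hy.1
      have := hBr_bound θb hθb0
      linarith
    -- θa with F θa > 0
    set un : ℕ → ℝ := fun n => 1/(n+1) with hundef
    have hun_pos : ∀ n, 0 < un n := fun n => by positivity
    have hun_le1 : ∀ n, un n ≤ 1 := fun n => by
      rw [hundef]
      rw [div_le_one (by positivity)]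
      simp
    have hun_tendsto : Tendsto un atTop (𝓝 0) := tendsto_one_div_add_atTop_nhds_zero_nat
    have hun_anti : ∀ n m, n ≤ m → un m ≤ un n := by
      intro n m hnm
      apply one_div_le_one_div_of_le (by positivity)
      have : (n:ℝ) ≤ m := Nat.cast_le.mpr hnm
      linarith
    have hP_lim : ∀ y : ℝ, 0 < y →
        Tendsto (fun n => S8.P h g α y₀ (un n) y) atTop (𝓝 (S8.P h g α y₀ 0 y)) := by
      intro y hy
      exact ((hA.P_theta_cont hy).tendsto 0).comp hun_tendsto
    set B1 : ℝ := ∫ y in Ioi y₀, S8.P h g α y₀ 1 y with hB1def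
    have hBr_ge : ∀ n, B1 ≤ ∫ y in Ioi y₀, S8.P h g α y₀ (un n) y := by
      intro n
      apply setIntegral_mono_on (hA.int_high one_pos) (hA.int_high (hun_pos n)) measurableSet_Ioi
      exact fun y hy => hA.P_mono_pt (hun_le1 n) (hy₀.trans hy)
    have hθa : ∃ θa : ℝ, 0 < θa ∧ 0 < S8.F h g α y₀ θa := by
      by_cases hPfin : PL = ⊤
      · -- lintegrals tend to ⊤
        have harl : Tendsto (fun n => ∫⁻ y in Ioc (0:ℝ) y₀,
            ENNReal.ofReal (S8.P h g α y₀ (un n) y)) atTop (𝓝 PL) := by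
          rw [hPLdef]
          apply lintegral_tendsto_of_tendsto_of_monotone
          · intro n
            exact (ENNReal.measurable_ofReal.comp_aemeasurable
              (((hA.Pcont (un n)).mono (fun x hx => hx.1)).aestronglyMeasurable
                measurableSet_Ioc).aemeasurable)
          · rw [ae_restrict_iff' measurableSet_Ioc]
            filter_upwards with y hy
            intro n m hnm
            exact ENNReal.ofReal_le_ofReal (hA.P_mono_pt (hun_anti n m hnm) hy.1)
          · rw [ae_restrict_iff' measurableSet_Ioc]
            filter_upwards with y hy
            exact (ENNReal.continuous_ofReal.tendsto _).comp (hP_lim y hy.1)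
        set T : ℝ := max (1 - B1) 1 with hTdef
        have hT1 : (1:ℝ) ≤ T := le_max_right _ _
        have hTB : 1 - B1 ≤ T := le_max_left _ _
        have hev : ∀ᶠ n in atTop, ENNReal.ofReal T < ∫⁻ y in Ioc (0:ℝ) y₀,
            ENNReal.ofReal (S8.P h g α y₀ (un n) y) := by
          rw [hPfin] at harl
          exact harl.eventually_mem (isOpen_Ioi.mem_nhds ENNReal.ofReal_lt_top)
        obtain ⟨n, hn⟩ := hev.exists
        have hofar : ENNReal.ofReal (∫ y in Ioc (0:ℝ) y₀, S8.P h g α y₀ (un n) y)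
            = ∫⁻ y in Ioc (0:ℝ) y₀, ENNReal.ofReal (S8.P h g α y₀ (un n) y) :=
          ofReal_integral_eq_lintegral_ofReal (hA.int_low (hun_pos n))
            ((ae_restrict_iff' measurableSet_Ioc).mpr (ae_of_all _ fun y hy =>
              hA.P_low_nonneg _ hy.1 hy.2))
        rw [← hofar] at hn
        have hTlt : T < ∫ y in Ioc (0:ℝ) y₀, S8.P h g α y₀ (un n) y :=
          (ENNReal.ofReal_lt_ofReal_iff_of_nonneg (by linarith)).1 hn
        refine ⟨un n, hun_pos n, ?_⟩
        rw [hA.F_split (hun_pos n)]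
        have := hBr_ge n
        linarith
      · -- PL finite : dominated convergence
        have hP0int_low : IntegrableOn (S8.P h g α y₀ 0) (Ioc 0 y₀) := by
          constructor
          · exact ((hA.Pcont 0).mono (fun x hx => hx.1)).aestronglyMeasurable measurableSet_Ioc
          · rw [HasFiniteIntegral]
            have : (∫⁻ y in Ioc (0:ℝ) y₀, ‖S8.P h g α y₀ 0 y‖ₑ) = PL := by
              rw [hPLdef]
              apply setLIntegral_congr_fun measurableSet_Ioc
              intro y hy
              exact Real.enorm_eq_ofReal (hA.P_low_nonneg 0 hy.1 hy.2)
            rw [this]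
            exact lt_top_iff_ne_top.2 hPfin
        set Pr : ℝ := ∫ y in Ioc (0:ℝ) y₀, S8.P h g α y₀ 0 y with hPrdef
        have hPrPL : ENNReal.ofReal Pr = PL :=
          ofReal_integral_eq_lintegral_ofReal hP0int_low
            ((ae_restrict_iff' measurableSet_Ioc).mpr (ae_of_all _ fun y hy =>
              hA.P_low_nonneg 0 hy.1 hy.2))
        have hNrPr : Nr < Pr := by
          rw [← hPrPL] at hlt
          exact (ENNReal.ofReal_lt_ofReal_iff_of_nonneg hNr0).1 hlt
        have hAr_lim : Tendsto (fun n => ∫ y in Ioc (0:ℝ) y₀, S8.P h g α y₀ (un n) y)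
            atTop (𝓝 Pr) := by
          apply tendsto_integral_of_dominated_convergence (S8.P h g α y₀ 0)
          · intro n
            exact ((hA.Pcont (un n)).mono (fun x hx => hx.1)).aestronglyMeasurable
              measurableSet_Ioc
          · exact hP0int_low
          · intro n
            rw [ae_restrict_iff' measurableSet_Ioc]
            filter_upwards with y hy
            rw [Real.norm_of_nonneg (hA.P_low_nonneg _ hy.1 hy.2)]
            exact hA.P_mono_pt (hun_pos n).le hy.1
          · rw [ae_restrict_iff' measurableSet_Ioc]
            filter_upwards with y hy
            exact hP_lim y hy.1
        have hBr_lim : Tendsto (fun n => ∫ y in Ioi y₀, S8.P h g α y₀ (un n) y)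
            atTop (𝓝 (-Nr)) := by
          have : (-Nr) = ∫ y in Ioi y₀, S8.P h g α y₀ 0 y := by
            rw [hNrdef, MeasureTheory.integral_neg]; ring
          rw [this]
          apply tendsto_integral_of_dominated_convergence (fun y => -S8.P h g α y₀ 1 y)
          · intro n
            exact ((hA.Pcont (un n)).mono (fun x hx => hy₀.trans hx)).aestronglyMeasurable
              measurableSet_Ioi
          · exact (hA.int_high one_pos).neg
          · intro n
            rw [ae_restrict_iff' measurableSet_Ioi]
            filter_upwards with y hy
            rw [Real.norm_of_nonpos (hA.P_high_nonpos _ hy.out.le)]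
            have := hA.P_mono_pt (hun_le1 n) (hy₀.trans hy)
            linarith
          · rw [ae_restrict_iff' measurableSet_Ioi]
            filter_upwards with y hy
            exact hP_lim y (hy₀.trans hy)
        have hF_lim : Tendsto (fun n => S8.F h g α y₀ (un n)) atTop (𝓝 (Pr + (-Nr))) := by
          have := hAr_lim.add hBr_lim
          apply this.congr
          intro n
          exact (hA.F_split (hun_pos n)).symm
        have hev : ∀ᶠ n in atTop, 0 < S8.F h g α y₀ (un n) :=
          hF_lim.eventually (eventually_gt_nhds (by linarith))
        obtain ⟨n, hn⟩ := hev.exists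
        exact ⟨un n, hun_pos n, hn⟩
    -- IVT
    obtain ⟨θa, hθa0, hFa⟩ := hθa
    obtain ⟨θb, hθb1, hFb⟩ := hθb
    have hθb0 : (0:ℝ) < θb := lt_of_lt_of_le one_pos hθb1
    have hab : θa < θb := by
      by_contra hcon
      push_neg at hcon
      rcases eq_or_lt_of_le hcon with rfl | hlt2
      · linarith
      · have := hA.F_anti hθb0 hlt2
        linarith
    have hcont : ContinuousOn (S8.F h g α y₀) (Icc θa θb) := fun x hx =>
      (hA.F_contAt (lt_of_lt_of_le hθa0 hx.1)).continuousWithinAt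
    have hIVT := intermediate_value_Icc' hab.le hcont
    have h0mem : (0:ℝ) ∈ Icc (S8.F h g α y₀ θb) (S8.F h g α y₀ θa) := ⟨hFb.le, hFa.le⟩
    obtain ⟨θ, hθmem, hFθ⟩ := hIVT h0mem
    have hθpos : 0 < θ := lt_of_lt_of_le hθa0 hθmem.1
    exact ⟨θ, hθpos, (key_root θ hθpos).2 hFθ⟩
  · -- uniqueness
    intro θ₁ θ₂ h1 h2 e1 e2
    have f1 : S8.F h g α y₀ θ₁ = 0 := (key_root θ₁ h1).1 e1
    have f2 : S8.F h g α y₀ θ₂ = 0 := (key_root θ₂ h2).1 e2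
    rcases lt_trichotomy θ₁ θ₂ with hlt | heq | hgt
    · have := hA.F_anti h1 hlt
      linarith
    · exact heq
    · have := hA.F_anti h2 hgt
      linarith
end

section
/- Let h : ℝ → ℝ be Lipschitz continuous and concave, and let T > 0. (i) If u, v : [0,T] → ℝ are differentiable with u′(t) = h(u(t)) and v′(t) = h(v(t)) for all t ∈ [0,T] and u(0) ≤ v(0), then u(t) ≤ v(t) for all t ∈ [0,T]. (ii) If moreover λ ∈ [0,1] and w : [0,T] → ℝ is differentiable with w′(t) = h(w(t)) for all t ∈ [0,T] and w(0) = λu(0) + (1−λ)v(0), then w(t) ≥ λu(t) + (1−λ)v(t) for all t ∈ [0,T]. -/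
open Set Filter Topology

lemma gron_aux (C : NNReal) (T : ℝ) (f f' : ℝ → ℝ)
    (hd : ∀ t ∈ Icc (0:ℝ) T, HasDerivWithinAt f (f' t) (Icc 0 T) t)
    (h0 : f 0 ≤ 0)
    (hb : ∀ t ∈ Ico (0:ℝ) T, 0 ≤ f t → f' t ≤ C * f t) :
    ∀ t ∈ Icc (0:ℝ) T, f t ≤ 0 := by
  intro t ht
  set g : ℝ → ℝ := fun x => max (f x) 0 with hg
  have hfc : ContinuousOn f (Icc 0 T) := fun x hx => (hd x hx).continuousWithinAt
  have hgc : ContinuousOn g (Icc 0 T) := fun x hx => (hfc x hx).max continuousWithinAt_const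
  have hnb : ∀ x ∈ Ico (0:ℝ) T, Icc (0:ℝ) T \ {x} ∈ 𝓝[>] x := by
    intro x hx
    filter_upwards [Ioc_mem_nhdsGT_of_mem ⟨le_refl x, hx.2⟩] with z hz
    exact ⟨⟨le_trans hx.1 hz.1.le, hz.2⟩, ne_of_gt hz.1⟩
  have key := le_gronwallBound_of_liminf_deriv_right_le (f := g)
      (f' := fun x => C * g x) (δ := 0) (K := C) (ε := 0) (a := 0) (b := T) hgc
      ?_ (max_le h0 le_rfl) (fun x _ => by simp)
  · have h1 := key t ht
    rw [gronwallBound_ε0] at h1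
    simp only [zero_mul] at h1
    exact le_trans (le_max_left (f t) 0) h1
  · intro x hx r hr
    have hrpos : 0 < r := lt_of_le_of_lt (by positivity) hr
    have hle : 𝓝[>] x ≤ 𝓝[Icc (0:ℝ) T \ {x}] x := nhdsWithin_le_iff.mpr (hnb x hx)
    rcases lt_or_ge (f x) 0 with hfx | hfx
    · -- f x < 0 : g = 0 near x
      have hev : ∀ᶠ z in 𝓝[>] x, f z < 0 := by
        have h1 : ∀ᶠ z in 𝓝[Icc (0:ℝ) T] x, f z < 0 :=
          (hfc x ⟨hx.1, hx.2.le⟩).eventually_lt_const hfx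
        have h2 : 𝓝[>] x ≤ 𝓝[Icc (0:ℝ) T] x := by
          rw [nhdsWithin_le_iff]
          filter_upwards [hnb x hx] with z hz using hz.1
        exact h2 h1
      apply Eventually.frequently
      filter_upwards [hev] with z hz
      have hgz : g z = 0 := max_eq_right hz.le
      have hgx : g x = 0 := max_eq_right hfx.le
      simpa [hgz, hgx] using hrpos
    · -- 0 ≤ f x
      have hgx : g x = f x := max_eq_left hfx
      have hf'r : f' x < r := lt_of_le_of_lt (le_trans (hb x hx hfx) (by beta_reduce; rw [hgx])) hr
      have hslope : Tendsto (slope f x) (𝓝[>] x) (𝓝 (f' x)) :=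
        (hasDerivWithinAt_iff_tendsto_slope.mp (hd x ⟨hx.1, hx.2.le⟩)).mono_left hle
      apply Eventually.frequently
      filter_upwards [hslope.eventually_lt_const hf'r, self_mem_nhdsWithin] with z hz hzx
      have hzx' : (0:ℝ) < z - x := sub_pos.mpr hzx
      have h1 : g z - g x ≤ max (f z - f x) 0 := by
        rw [hgx, sub_le_iff_le_add]
        exact max_le (by linarith [le_max_left (f z - f x) (0:ℝ)])
          (add_nonneg (le_max_right _ _) hfx)
      have h2 : (z - x)⁻¹ * (g z - g x) ≤ (z - x)⁻¹ * max (f z - f x) 0 :=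
        mul_le_mul_of_nonneg_left h1 (inv_nonneg.mpr hzx'.le)
      have h3 : (z - x)⁻¹ * max (f z - f x) 0 < r := by
        rcases le_total (f z - f x) 0 with hc | hc
        · rw [max_eq_right hc]; simpa using hrpos
        · rw [max_eq_left hc]
          have : slope f x z = (z - x)⁻¹ * (f z - f x) := by
            rw [slope_def_field]; ring
          rw [this] at hz
          exact hz
      exact lt_of_le_of_lt h2 h3

/-- The deterministic core of Lemma 6.1: the flow of the ODE `y' = h(y)` with
Lipschitz concave drift `h` is (i) monotone and (ii) concave in the initial value. -/
theorem stmt12 (h : ℝ → ℝ) (C : NNReal) (hlip : LipschitzWith C h)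
    (hconc : ConcaveOn ℝ univ h) (T : ℝ) (hT : 0 < T) :
    (∀ u v : ℝ → ℝ,
      (∀ t ∈ Icc (0:ℝ) T, HasDerivWithinAt u (h (u t)) (Icc 0 T) t) →
      (∀ t ∈ Icc (0:ℝ) T, HasDerivWithinAt v (h (v t)) (Icc 0 T) t) →
      u 0 ≤ v 0 → ∀ t ∈ Icc (0:ℝ) T, u t ≤ v t) ∧
    (∀ u v w : ℝ → ℝ, ∀ l : ℝ, l ∈ Icc (0:ℝ) 1 →
      (∀ t ∈ Icc (0:ℝ) T, HasDerivWithinAt u (h (u t)) (Icc 0 T) t) →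
      (∀ t ∈ Icc (0:ℝ) T, HasDerivWithinAt v (h (v t)) (Icc 0 T) t) →
      (∀ t ∈ Icc (0:ℝ) T, HasDerivWithinAt w (h (w t)) (Icc 0 T) t) →
      u 0 ≤ v 0 → w 0 = l * u 0 + (1 - l) * v 0 →
      ∀ t ∈ Icc (0:ℝ) T, l * u t + (1 - l) * v t ≤ w t) := by
  have hlipR : ∀ a b : ℝ, h a - h b ≤ C * |a - b| := by
    intro a b
    have := hlip.dist_le_mul a b
    rw [Real.dist_eq, Real.dist_eq] at this
    calc h a - h b ≤ |h a - h b| := le_abs_self _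
      _ ≤ C * |a - b| := this
  constructor
  · intro u v hu hv h0 t ht
    have := gron_aux C T (fun s => u s - v s) (fun s => h (u s) - h (v s))
      (fun s hs => (hu s hs).sub (hv s hs)) (by simpa using h0)
      (fun s hs hfs => by
        beta_reduce at hfs ⊢
        have := hlipR (u s) (v s)
        rwa [abs_of_nonneg hfs] at this) t ht
    beta_reduce at this
    linarith
  · intro u v w l hl hu hv hw _ h0 t ht
    have hl1 : (0:ℝ) ≤ 1 - l := by linarith [hl.2]
    have := gron_aux C T (fun s => l * u s + (1 - l) * v s - w s)
      (fun s => l * h (u s) + (1 - l) * h (v s) - h (w s))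
      (fun s hs => (((hu s hs).const_mul l).add ((hv s hs).const_mul (1 - l))).sub (hw s hs))
      (by simp [h0])
      (fun s hs hfs => by
        beta_reduce at hfs ⊢
        have hcc : l * h (u s) + (1 - l) * h (v s) ≤ h (l * u s + (1 - l) * v s) := by
          have := hconc.2 (mem_univ (u s)) (mem_univ (v s)) hl.1 hl1 (by ring)
          simpa [smul_eq_mul] using this
        have hlr := hlipR (l * u s + (1 - l) * v s) (w s)
        rw [abs_of_nonneg hfs] at hlr
        linarith) t ht
    beta_reduce at this
    linarith
end
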